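/- arXiv:2405.05415 — 6 statements merged into one kernel-verified Lean document; each statement's English description precedes it below -/
import Mathlib

section
/- Let Ω ⊂ ℝ² be a convex bounded set with nonempty interior and let f : ℝ² → ℝ be continuous and twice differentiable at (0,0). If the quadratic form f''(0,0) is negative definite, then the zero function u ≡ 0 is not a local minimum of the functional F(u) = ∫_Ω f(∇u(x,y)) dx dy on U_Ω with respect to the C¹ norm: in every C¹-neighborhood of 0 there is a nonzero u ∈ U_Ω with F(u) < F(0). -/
open MeasureTheory Real Set Filter Asymptotics

/-- The partial derivative `u_x` (defined via the full derivative; `0` where `u` is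
not differentiable). -/
noncomputable def uX (u : ℝ × ℝ → ℝ) (p : ℝ × ℝ) : ℝ := fderiv ℝ u p (1, 0)

/-- The partial derivative `u_y`. -/
noncomputable def uY (u : ℝ × ℝ → ℝ) (p : ℝ × ℝ) : ℝ := fderiv ℝ u p (0, 1)

/-- Membership in the class `U_Ω`: continuous concave functions on `Ω`, differentiable
almost everywhere, with bounded gradient, vanishing on `∂Ω`. -/
def MemU (Ω : Set (ℝ × ℝ)) (u : ℝ × ℝ → ℝ) : Prop :=
  ContinuousOn u (closure Ω) ∧ ConcaveOn ℝ Ω u ∧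
    (∀ᵐ p ∂(volume.restrict Ω), DifferentiableAt ℝ u p) ∧
    (∃ C : ℝ, ∀ p ∈ Ω, DifferentiableAt ℝ u p → ‖fderiv ℝ u p‖ ≤ C) ∧
    (∀ p ∈ frontier Ω, u p = 0)

/-- `∫_Ω u_x² dx dy`. -/
noncomputable def Ix (Ω : Set (ℝ × ℝ)) (u : ℝ × ℝ → ℝ) : ℝ := ∫ p in Ω, (uX u p) ^ 2

/-- `∫_Ω u_y² dx dy`. -/
noncomputable def Iy (Ω : Set (ℝ × ℝ)) (u : ℝ × ℝ → ℝ) : ℝ := ∫ p in Ω, (uY u p) ^ 2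

/-- The abscissa of the left vertical support line of `Ω`. -/
noncomputable def leftX (Ω : Set (ℝ × ℝ)) : ℝ := sInf (Prod.fst '' Ω)

/-- The abscissa of the right vertical support line of `Ω`. -/
noncomputable def rightX (Ω : Set (ℝ × ℝ)) : ℝ := sSup (Prod.fst '' Ω)

/-- The vertical support line `{x = x₀}` of `Ω`, touching `Ω` at the contact point
`(x₀, p₂)`, is angular: every `(x,y) ∈ Ω` satisfies `|y - p₂| ≤ C|x - x₀|`. -/
def AngularSupportAt (Ω : Set (ℝ × ℝ)) (x₀ : ℝ) : Prop :=
  ∃ p₂ : ℝ, (x₀, p₂) ∈ closure Ω ∧ ∃ C > 0, ∀ q ∈ Ω, |q.2 - p₂| ≤ C * |q.1 - x₀|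

/-- The `C¹` norm `sup |u| + sup |u_x| + sup |u_y|`, the suprema over the derivatives
being taken over the points where they exist. -/
noncomputable def C1Norm (Ω : Set (ℝ × ℝ)) (u : ℝ × ℝ → ℝ) : ℝ :=
  sSup ((fun p => |u p|) '' Ω) +
    sSup ((fun p => |uX u p|) '' {p ∈ Ω | DifferentiableAt ℝ u p}) +
    sSup ((fun p => |uY u p|) '' {p ∈ Ω | DifferentiableAt ℝ u p})

/-- The resistance functional `F(u) = ∫_Ω f(∇u) dx dy`. -/
noncomputable def Fres (Ω : Set (ℝ × ℝ)) (f : ℝ × ℝ → ℝ) (u : ℝ × ℝ → ℝ) : ℝ :=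
  ∫ p in Ω, f (uX u p, uY u p)

/-- The zero function is a local minimum of `F` on `U_Ω` in the `C¹` norm. -/
def ZeroIsLocalMin (Ω : Set (ℝ × ℝ)) (f : ℝ × ℝ → ℝ) : Prop :=
  ∃ δ : ℝ, 0 < δ ∧ ∀ u : ℝ × ℝ → ℝ, MemU Ω u → C1Norm Ω u < δ →
    Fres Ω f (fun _ => 0) ≤ Fres Ω f u

/-- `n` is an outward normal of a support line to `Ω` at `ξ`. -/
def IsSupportDir (Ω : Set (ℝ × ℝ)) (ξ n : ℝ × ℝ) : Prop :=
  n ≠ 0 ∧ ∀ q ∈ Ω, n.1 * q.1 + n.2 * q.2 ≤ n.1 * ξ.1 + n.2 * ξ.2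

/-- `ξ` is a regular boundary point: the support line at `ξ` is unique. -/
def IsRegularPoint (Ω : Set (ℝ × ℝ)) (ξ : ℝ × ℝ) : Prop :=
  ξ ∈ frontier Ω ∧
    ∀ n m : ℝ × ℝ, IsSupportDir Ω ξ n → IsSupportDir Ω ξ m → ∃ t : ℝ, m = t • n

/-- `ξ` is a singular boundary point: `Ω` has more than one support line at `ξ`. -/
def IsSingularPoint (Ω : Set (ℝ × ℝ)) (ξ : ℝ × ℝ) : Prop :=
  ξ ∈ frontier Ω ∧
    ∃ n m : ℝ × ℝ, IsSupportDir Ω ξ n ∧ IsSupportDir Ω ξ m ∧ ¬∃ t : ℝ, m = t • n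


/-!
The competitor is `u = ε · dist(·, ℝ² \ Ω)`, a concave function vanishing on `∂Ω` whose gradient
has norm `≤ ε` everywhere and `≥ ε/2` a.e. in `Ω` (for the sup norm of `ℝ × ℝ`). Expanding
`f(∇u) = f(0) + L(∇u) + ½ B(∇u, ∇u) + o(|∇u|²)`, the linear term integrates to zero because
`∫_Ω ∇u = 0` (the distance function is Lipschitz with compact support), while the quadratic term
is `≤ -c ε²` pointwise a.e.; hence `F(u) < F(0)` for small `ε`, and `‖u‖_{C¹} = O(ε)`.
-/

open Metric Topology

lemma hasCompactSupport_infDist_compl {α : Type*} [MetricSpace α] [ProperSpace α] {s : Set α}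
    (hs : Bornology.IsBounded s) : HasCompactSupport (infDist · sᶜ) :=
  HasCompactSupport.intro' hs.isCompact_closure isClosed_closure fun _ hp =>
    infDist_zero_of_mem fun hps => hp (subset_closure hps)

lemma infDist_compl_pos {α : Type*} [MetricSpace α] {s : Set α} {p : α} (hs : sᶜ.Nonempty)
    (hp : p ∈ interior s) : 0 < infDist p sᶜ :=
  (infDist_pos_iff_notMem_closure hs).1 (by rwa [closure_compl, mem_compl_iff, not_not])

section NormedSpace

variable {E : Type*} [NormedAddCommGroup E] [NormedSpace ℝ E] {s : Set E}

lemma Bornology.IsBounded.nonempty_compl [Nontrivial E] (hs : Bornology.IsBounded s) :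
    sᶜ.Nonempty :=
  Set.nonempty_compl.2 fun h => NormedSpace.unbounded_univ ℝ E (h ▸ hs)

lemma add_smul_mem_of_infDist_compl {p w : E} (hp : p ∈ s) {D : ℝ} (hw : ‖w‖ < D) :
    p + (infDist p sᶜ / D) • w ∈ s := by
  rcases (infDist_nonneg : 0 ≤ infDist p sᶜ).eq_or_lt with h0 | hpos
  · simpa [← h0] using hp
  apply ball_infDist_compl_subset
  have hD : 0 < D := (norm_nonneg w).trans_lt hw
  rw [mem_ball, dist_self_add_left, norm_smul, Real.norm_of_nonneg (by positivity),
    div_mul_comm]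
  exact mul_lt_of_lt_one_left hpos ((div_lt_one hD).2 hw)

theorem Convex.concaveOn_infDist_compl (hs : Convex ℝ s) : ConcaveOn ℝ s (infDist · sᶜ) := by
  rcases sᶜ.eq_empty_or_nonempty with he | hne
  · simpa [he] using concaveOn_const (0 : ℝ) hs
  refine ⟨hs, fun p hp q hq a b ha hb hab => ?_⟩
  set D := a • infDist p sᶜ + b • infDist q sᶜ
  refine (le_infDist hne).2 fun z hz => not_lt.1 fun hzD => hz ?_
  set w := z - (a • p + b • q)
  have hw : ‖w‖ < D := by rwa [← dist_eq_norm, dist_comm]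
  -- `z` is a convex combination of the points `p + (d(p)/D) w` and `q + (d(q)/D) w` of `s`.
  have hcombo : a • (p + (infDist p sᶜ / D) • w) + b • (q + (infDist q sᶜ / D) • w) = z := by
    have hD : D ≠ 0 := ((norm_nonneg w).trans_lt hw).ne'
    have hsum : a * (infDist p sᶜ / D) + b * (infDist q sᶜ / D) = 1 := by
      field_simp
      simp [D, smul_eq_mul]
    calc _ = (a • p + b • q) + (a * (infDist p sᶜ / D) + b * (infDist q sᶜ / D)) • w := by
          module
      _ = z := by rw [hsum, one_smul, add_sub_cancel]
  rw [← hcombo]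
  exact hs (add_smul_mem_of_infDist_compl hp hw) (add_smul_mem_of_infDist_compl hq hw) ha hb hab

lemma norm_fderiv_infDist_le_one (t : Set E) (p : E) : ‖fderiv ℝ (infDist · t) p‖ ≤ 1 := by
  simpa using norm_fderiv_le_of_lipschitz ℝ (lipschitz_infDist_pt t) (x₀ := p)

lemma norm_fderiv_const_smul_infDist_le (t : Set E) {ε : ℝ} (hε : 0 ≤ ε) (p : E) :
    ‖fderiv ℝ (ε • (infDist · t)) p‖ ≤ ε := by
  rw [fderiv_const_smul_field, Pi.smul_apply, norm_smul, Real.norm_of_nonneg hε]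
  exact mul_le_of_le_one_right hε (norm_fderiv_infDist_le_one t p)

lemma one_le_norm_fderiv_infDist [ProperSpace E] {t : Set E} {p : E} (hp : 0 < infDist p t)
    (hd : DifferentiableAt ℝ (infDist · t) p) : 1 ≤ ‖fderiv ℝ (infDist · t) p‖ := by
  have ht : t.Nonempty := nonempty_iff_ne_empty.2 fun h => by simp [h] at hp
  obtain ⟨q, hq, hpq⟩ := exists_mem_closure_infDist_eq_dist ht p
  set r := infDist p t
  set v := r⁻¹ • (q - p)
  have hv : ‖v‖ = 1 := by
    rw [norm_smul, ← dist_eq_norm', ← hpq, norm_inv, Real.norm_of_nonneg hp.le,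
      inv_mul_cancel₀ hp.ne']
  -- moving from `p` towards a nearest point `q` decreases the distance to `t` at unit speed
  have hslope : ∀ τ ∈ Ioc 0 r, τ⁻¹ • (infDist (p + τ • v) t - infDist p t) ≤ -1 := by
    rintro τ ⟨hτ, hτr⟩
    have hdist : dist (p + τ • v) q = r - τ := by
      have : q - (p + τ • v) = (r - τ) • v := by
        rw [sub_smul, smul_inv_smul₀ hp.ne']; abel
      rw [dist_comm, dist_eq_norm, this, norm_smul, hv, mul_one,
        Real.norm_of_nonneg (by linarith)]
    have := (infDist_closure (x := p + τ • v) (s := t)) ▸ infDist_le_dist_of_mem hq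
    rw [smul_eq_mul, inv_mul_le_iff₀ hτ]
    linarith
  have hle : fderiv ℝ (infDist · t) p v ≤ -1 :=
    le_of_tendsto (hd.hasFDerivAt.hasLineDerivAt v).tendsto_slope_zero_right
      (eventually_of_mem (Ioc_mem_nhdsGT hp) hslope)
  calc 1 ≤ |fderiv ℝ (infDist · t) p v| := by rw [abs_of_neg (by linarith)]; linarith
    _ ≤ ‖fderiv ℝ (infDist · t) p‖ := (fderiv ℝ (infDist · t) p).unit_le_opNorm v hv.le

lemma fderiv_infDist_compl_of_notMem_closure {p : E} (hp : p ∉ closure s) :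
    fderiv ℝ (infDist · sᶜ) p = 0 := by
  have h : (infDist · sᶜ) =ᶠ[𝓝 p] fun _ => (0 : ℝ) := by
    filter_upwards [isClosed_closure.isOpen_compl.mem_nhds hp] with q hq
    exact infDist_zero_of_mem fun hqs => hq (subset_closure hqs)
  rw [h.fderiv_eq, fderiv_const_apply]

section Integral

variable [FiniteDimensional ℝ E] [MeasurableSpace E] [BorelSpace E] (μ : Measure E)
  [μ.IsAddHaarMeasure]

theorem LipschitzWith.integral_fderiv_apply_eq_zero {C : NNReal} {f : E → ℝ}
    (hf : LipschitzWith C f) (h'f : HasCompactSupport f) (v : E) :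
    ∫ x, fderiv ℝ f x v ∂μ = 0 := by
  have hparts := integral_lineDeriv_mul_eq (μ := μ) (LipschitzWith.const (1 : ℝ)) hf h'f (-v)
  have hconst (x w : E) : lineDeriv ℝ (fun _ : E => (1 : ℝ)) x w = 0 := by simp [lineDeriv]
  simp only [hconst, zero_mul, integral_zero, neg_neg, mul_one] at hparts
  rw [hparts]
  refine integral_congr_ae ?_
  filter_upwards [hf.ae_differentiableAt] with x hx
  exact hx.lineDeriv_eq_fderiv.symm

theorem Convex.setIntegral_fderiv_infDist_compl (hs : Convex ℝ s)
    (h's : Bornology.IsBounded s) (v : E) : ∫ x in s, fderiv ℝ (infDist · sᶜ) x v ∂μ = 0 := by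
  rw [setIntegral_congr_set (closure_ae_eq_of_null_frontier (hs.addHaar_frontier μ)).symm,
    setIntegral_eq_integral_of_forall_compl_eq_zero fun x hx => by
      rw [fderiv_infDist_compl_of_notMem_closure hx, zero_apply]]
  exact (lipschitz_infDist_pt sᶜ).integral_fderiv_apply_eq_zero μ
    (hasCompactSupport_infDist_compl h's) v

end Integral

lemma exists_pos_forall_apply_self_le_neg_mul_norm_sq [FiniteDimensional ℝ E] [Nontrivial E]
    (B : E →L[ℝ] E →L[ℝ] ℝ) (hneg : ∀ v, v ≠ 0 → B v v < 0) :
    ∃ c > 0, ∀ v, B v v ≤ -c * ‖v‖ ^ 2 := by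
  obtain ⟨w, hw, hmax⟩ := (isCompact_sphere (0 : E) 1).exists_isMaxOn
    (NormedSpace.sphere_nonempty.2 zero_le_one) (B.continuous₂.comp
      (continuous_id.prodMk continuous_id)).continuousOn
  refine ⟨-B w w, neg_pos.2 (hneg w (ne_zero_of_mem_unit_sphere ⟨w, hw⟩)), fun v => ?_⟩
  rcases eq_or_ne v 0 with rfl | hv
  · simp
  have hv' : 0 < ‖v‖ := norm_pos_iff.2 hv
  have hunit : ‖v‖⁻¹ • v ∈ sphere (0 : E) 1 := by
    rw [mem_sphere_zero_iff_norm, norm_smul, norm_inv, norm_norm, inv_mul_cancel₀ hv'.ne']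
  have hle : B (‖v‖⁻¹ • v) (‖v‖⁻¹ • v) ≤ B w w := hmax hunit
  simp only [map_smul, smul_apply, smul_eq_mul] at hle
  have : B v v = ‖v‖ ^ 2 * (‖v‖⁻¹ * (‖v‖⁻¹ * B v v)) := by field_simp
  rw [this]
  nlinarith [sq_nonneg ‖v‖]

lemma eventually_sub_sub_le_neg_mul_norm_sq {f : E → ℝ} {L : E →L[ℝ] ℝ} {Q : E → ℝ}
    (hTaylor : (fun ζ => f ζ - f 0 - L ζ - (1 / 2) * Q ζ) =o[𝓝 0] fun ζ => ‖ζ‖ ^ 2)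
    {c : ℝ} (hc : 0 < c) (hQ : ∀ v, Q v ≤ -c * ‖v‖ ^ 2) :
    ∀ᶠ ζ in 𝓝 0, f ζ - f 0 - L ζ ≤ -(c / 4) * ‖ζ‖ ^ 2 := by
  filter_upwards [hTaylor.def (by positivity : 0 < c / 4)] with ζ hζ
  rw [Real.norm_eq_abs, norm_pow, norm_norm] at hζ
  linarith [(abs_le.1 hζ).2, hQ ζ]

end NormedSpace

theorem integral_comp_lt_of_integral_eq_zero {X E : Type*} [MeasurableSpace X] {μ : Measure X}
    [IsFiniteMeasure μ] [NeZero μ] [NormedAddCommGroup E] [NormedSpace ℝ E] [ProperSpace E]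
    {f : E → ℝ} (hf : Continuous f) (L : E →L[ℝ] ℝ) {g : X → E}
    (hg : AEStronglyMeasurable g μ) {R : ℝ} (hgR : ∀ x, ‖g x‖ ≤ R) (hg0 : ∫ x, g x ∂μ = 0)
    {κ : ℝ} (hκ : 0 < κ) (hfg : ∀ᵐ x ∂μ, f (g x) - f 0 - L (g x) ≤ -κ) :
    ∫ x, f (g x) ∂μ < ∫ _, f 0 ∂μ := by
  have hg_int : Integrable g μ := .of_bound hg R (ae_of_all _ hgR)
  obtain ⟨C, hC⟩ := (isCompact_closedBall (0 : E) R).exists_bound_of_continuousOn hf.continuousOn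
  have hfg_int : Integrable (fun x => f (g x)) μ :=
    .of_bound (hf.comp_aestronglyMeasurable hg) C
      (ae_of_all _ fun x => hC _ (mem_closedBall_zero_iff.2 (hgR x)))
  have hLg : ∫ x, L (g x) ∂μ = 0 := by rw [L.integral_comp_comm hg_int, hg0, map_zero]
  have hdiff_int : Integrable (fun x => f (g x) - f 0) μ := hfg_int.sub (integrable_const _)
  have hrest : ∫ x, f (g x) - f 0 - L (g x) ∂μ ≤ ∫ _, -κ ∂μ :=
    integral_mono_ae (hdiff_int.sub (L.integrable_comp hg_int)) (integrable_const _) hfg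
  rw [integral_sub hdiff_int (L.integrable_comp hg_int), hLg,
    integral_sub hfg_int (integrable_const _)] at hrest
  simp only [integral_const, smul_eq_mul] at hrest ⊢
  nlinarith [measureReal_univ_pos (μ := μ)]

noncomputable def grad (u : ℝ × ℝ → ℝ) (p : ℝ × ℝ) : ℝ × ℝ := (uX u p, uY u p)

lemma norm_grad_le (u : ℝ × ℝ → ℝ) (p : ℝ × ℝ) : ‖grad u p‖ ≤ ‖fderiv ℝ u p‖ :=
  max_le ((fderiv ℝ u p).unit_le_opNorm _ (by simp))
    ((fderiv ℝ u p).unit_le_opNorm _ (by simp))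

lemma norm_fderiv_le_two_mul_norm_grad (u : ℝ × ℝ → ℝ) (p : ℝ × ℝ) :
    ‖fderiv ℝ u p‖ ≤ 2 * ‖grad u p‖ := by
  set ℓ := fderiv ℝ u p
  refine ℓ.opNorm_le_bound (by positivity) fun v => ?_
  have hv : ℓ v = v.1 * uX u p + v.2 * uY u p := by
    rw [uX, uY, ← smul_eq_mul, ← smul_eq_mul, ← map_smul, ← map_smul, ← map_add]
    congr 1; ext <;> simp
  have h1 : |v.1| ≤ ‖v‖ := norm_fst_le v
  have h2 : |v.2| ≤ ‖v‖ := norm_snd_le v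
  have ha : |uX u p| ≤ ‖grad u p‖ := le_max_left _ _
  have hb : |uY u p| ≤ ‖grad u p‖ := le_max_right _ _
  rw [hv, Real.norm_eq_abs]
  calc |v.1 * uX u p + v.2 * uY u p| ≤ |v.1| * |uX u p| + |v.2| * |uY u p| := by
        rw [← abs_mul, ← abs_mul]; exact abs_add_le _ _
    _ ≤ 2 * ‖grad u p‖ * ‖v‖ := by
        nlinarith [abs_nonneg v.1, abs_nonneg v.2, abs_nonneg (uX u p), abs_nonneg (uY u p)]

lemma grad_const_smul (c : ℝ) (u : ℝ × ℝ → ℝ) (p : ℝ × ℝ) : grad (c • u) p = c • grad u p := by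
  ext <;> simp [grad, uX, uY, fderiv_const_smul_field]

lemma measurable_grad (u : ℝ × ℝ → ℝ) : Measurable (grad u) :=
  (measurable_fderiv_apply_const ℝ u _).prodMk (measurable_fderiv_apply_const ℝ u _)

lemma C1Norm_le {Ω : Set (ℝ × ℝ)} {u : ℝ × ℝ → ℝ} {A K : ℝ} (hA0 : 0 ≤ A) (hK0 : 0 ≤ K)
    (hA : ∀ p ∈ Ω, |u p| ≤ A) (hK : ∀ p, ‖fderiv ℝ u p‖ ≤ K) : C1Norm Ω u ≤ A + K + K := by
  have hgrad (p : ℝ × ℝ) : ‖grad u p‖ ≤ K := (norm_grad_le u p).trans (hK p)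
  unfold C1Norm
  gcongr
  · exact Real.sSup_le (forall_mem_image.2 hA) hA0
  · exact Real.sSup_le (forall_mem_image.2 fun p _ => (le_max_left _ _).trans (hgrad p)) hK0
  · exact Real.sSup_le (forall_mem_image.2 fun p _ => (le_max_right _ _).trans (hgrad p)) hK0

lemma memU_const_smul_infDist_compl {Ω : Set (ℝ × ℝ)} (hΩ : Convex ℝ Ω) {ε : ℝ} (hε : 0 ≤ ε) :
    MemU Ω (ε • (infDist · Ωᶜ)) := by
  refine ⟨((lipschitz_infDist_pt Ωᶜ).continuous.const_smul ε).continuousOn,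
    hΩ.concaveOn_infDist_compl.smul hε, ?_,
    ⟨ε, fun p _ _ => norm_fderiv_const_smul_infDist_le _ hε p⟩, fun p hp => ?_⟩
  · filter_upwards [ae_restrict_of_ae (lipschitz_infDist_pt Ωᶜ).ae_differentiableAt] with p hp
    exact hp.const_smul ε
  · rw [Pi.smul_apply, infDist_zero_of_mem_closure (by rw [closure_compl]; exact hp.2), smul_zero]

section ConvexDomain

variable {Ω : Set (ℝ × ℝ)}

lemma Convex.setIntegral_grad_infDist_compl (hconv : Convex ℝ Ω)
    (hbdd : Bornology.IsBounded Ω) : ∫ p in Ω, grad (infDist · Ωᶜ) p = 0 := by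
  have : IsFiniteMeasure (volume.restrict Ω) := isFiniteMeasure_restrict.2 hbdd.measure_lt_top.ne
  have hint : Integrable (grad (infDist · Ωᶜ)) (volume.restrict Ω) :=
    .of_bound (measurable_grad _).aestronglyMeasurable 1 (ae_of_all _ fun p =>
      (norm_grad_le _ p).trans (norm_fderiv_infDist_le_one _ p))
  ext
  · rw [fst_integral hint]; exact hconv.setIntegral_fderiv_infDist_compl volume hbdd _
  · rw [snd_integral hint]; exact hconv.setIntegral_fderiv_infDist_compl volume hbdd _

lemma Convex.ae_one_le_two_mul_norm_grad_infDist_compl (hconv : Convex ℝ Ω)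
    (hbdd : Bornology.IsBounded Ω) :
    ∀ᵐ p ∂volume.restrict Ω, 1 ≤ 2 * ‖grad (infDist · Ωᶜ) p‖ := by
  have hinterior : ∀ᵐ p ∂volume.restrict Ω, p ∈ interior Ω := by
    rw [← Measure.restrict_congr_set
      (interior_ae_eq_of_null_frontier (hconv.addHaar_frontier volume))]
    exact ae_restrict_mem isOpen_interior.measurableSet
  filter_upwards [hinterior, ae_restrict_of_ae (lipschitz_infDist_pt Ωᶜ).ae_differentiableAt]
    with p hp hdp
  exact (one_le_norm_fderiv_infDist (infDist_compl_pos hbdd.nonempty_compl hp) hdp).trans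
    (norm_fderiv_le_two_mul_norm_grad _ p)

theorem Convex.Fres_const_smul_infDist_compl_lt (hconv : Convex ℝ Ω)
    (hbdd : Bornology.IsBounded Ω) (hint : (interior Ω).Nonempty)
    {f : ℝ × ℝ → ℝ} (hf : Continuous f) (L : ℝ × ℝ →L[ℝ] ℝ) {c ε : ℝ} (hc : 0 < c)
    (hε : 0 < ε) (hloc : ∀ ζ, ‖ζ‖ ≤ ε → f ζ - f 0 - L ζ ≤ -c * ‖ζ‖ ^ 2) :
    Fres Ω f (ε • (infDist · Ωᶜ)) < Fres Ω f (fun _ => 0) := by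
  set g := grad (infDist · Ωᶜ)
  have : IsFiniteMeasure (volume.restrict Ω) := isFiniteMeasure_restrict.2 hbdd.measure_lt_top.ne
  have : NeZero (volume.restrict Ω) := ⟨by
    rw [Ne, Measure.restrict_eq_zero]
    exact (isOpen_interior.measure_pos volume hint).ne' ∘ measure_mono_null interior_subset⟩
  have hnorm (p : ℝ × ℝ) : ‖ε • g p‖ = ε * ‖g p‖ := by rw [norm_smul, Real.norm_of_nonneg hε.le]
  have hεg (p : ℝ × ℝ) : ‖ε • g p‖ ≤ ε :=
    hnorm p ▸ mul_le_of_le_one_right hε.le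
      ((norm_grad_le _ p).trans (norm_fderiv_infDist_le_one _ p))
  have hF0 : Fres Ω f (fun _ => 0) = ∫ p in Ω, f 0 := by simp [Fres, uX, uY, Prod.mk_zero_zero]
  change ∫ p in Ω, f (grad (ε • (infDist · Ωᶜ)) p) < _
  simp_rw [hF0, grad_const_smul]
  refine integral_comp_lt_of_integral_eq_zero hf L
    ((measurable_grad _).aestronglyMeasurable.const_smul ε) hεg
    (by rw [integral_smul, hconv.setIntegral_grad_infDist_compl hbdd, smul_zero])
    (κ := c * (ε / 2) ^ 2) (by positivity) ?_
  filter_upwards [hconv.ae_one_le_two_mul_norm_grad_infDist_compl hbdd] with p hp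
  calc f (ε • g p) - f 0 - L (ε • g p) ≤ -c * ‖ε • g p‖ ^ 2 := hloc _ (hεg p)
    _ ≤ -(c * (ε / 2) ^ 2) := by
        rw [hnorm, neg_mul, neg_le_neg_iff]
        gcongr
        nlinarith

end ConvexDomain

theorem stmt4_general (Ω : Set (ℝ × ℝ)) (hconv : Convex ℝ Ω) (hbdd : Bornology.IsBounded Ω)
    (hint : (interior Ω).Nonempty) (f : ℝ × ℝ → ℝ) (hf : Continuous f)
    (L : ℝ × ℝ →L[ℝ] ℝ) (B : ℝ × ℝ →L[ℝ] ℝ × ℝ →L[ℝ] ℝ)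
    (hTaylor : (fun ζ : ℝ × ℝ => f ζ - f 0 - L ζ - (1 / 2) * B ζ ζ)
        =o[nhds (0 : ℝ × ℝ)] fun ζ : ℝ × ℝ => ‖ζ‖ ^ 2)
    (hneg : ∀ v : ℝ × ℝ, v ≠ 0 → B v v < 0) :
    ∀ δ : ℝ, 0 < δ → ∃ u : ℝ × ℝ → ℝ, MemU Ω u ∧ (∃ p ∈ Ω, u p ≠ 0) ∧
      C1Norm Ω u < δ ∧ Fres Ω f u < Fres Ω f (fun _ => 0) := by
  intro δ hδ
  obtain ⟨c, hc, hB⟩ := exists_pos_forall_apply_self_le_neg_mul_norm_sq B hneg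
  obtain ⟨ρ, hρ, hloc⟩ := Metric.eventually_nhds_iff_ball.1
    (eventually_sub_sub_le_neg_mul_norm_sq hTaylor hc hB)
  obtain ⟨M, hM⟩ := (lipschitz_infDist_pt Ωᶜ).continuous.bounded_above_of_compact_support
    (hasCompactSupport_infDist_compl hbdd)
  have hM0 : 0 ≤ M := (norm_nonneg _).trans (hM 0)
  set ε := min (ρ / 2) (δ / (M + 3))
  have hε : 0 < ε := lt_min (by positivity) (by positivity)
  have hερ : ε < ρ := (min_le_left _ _).trans_lt (by linarith)
  have hεδ : ε * (M + 3) ≤ δ := (le_div_iff₀ (by positivity)).1 (min_le_right _ _)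
  obtain ⟨p, hp⟩ := hint
  refine ⟨ε • (infDist · Ωᶜ), memU_const_smul_infDist_compl hconv hε.le,
    ⟨p, interior_subset hp, ?_⟩, ?_, hconv.Fres_const_smul_infDist_compl_lt hbdd ⟨p, hp⟩ hf L
      (by positivity) hε fun ζ hζ => hloc ζ (mem_ball_zero_iff.2 (hζ.trans_lt hερ))⟩
  · exact smul_ne_zero hε.ne' (infDist_compl_pos hbdd.nonempty_compl hp).ne'
  · calc C1Norm Ω (ε • (infDist · Ωᶜ)) ≤ ε * M + ε + ε :=
          C1Norm_le (by positivity) hε.le (fun q _ => ?_)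
            (norm_fderiv_const_smul_infDist_le _ hε.le)
      _ < δ := by nlinarith
    rw [Pi.smul_apply, smul_eq_mul, abs_mul, abs_of_pos hε]
    exact mul_le_mul_of_nonneg_left (hM q) hε.le

/-- If `f''(0,0)` is negative definite then `u ≡ 0` is not a local minimum: in every
`C¹`-neighborhood of `0` there is a nonzero `u ∈ U_Ω` with `F(u) < F(0)`. -/
theorem stmt4 (Ω : Set (ℝ × ℝ)) (hconv : Convex ℝ Ω) (hbdd : Bornology.IsBounded Ω)
    (hint : (interior Ω).Nonempty) (f : ℝ × ℝ → ℝ) (hf : Continuous f)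
    (L : ℝ × ℝ →L[ℝ] ℝ) (B : ℝ × ℝ →L[ℝ] ℝ × ℝ →L[ℝ] ℝ)
    (hsymm : ∀ v w : ℝ × ℝ, B v w = B w v)
    (hTaylor : (fun ζ : ℝ × ℝ => f ζ - f 0 - L ζ - (1 / 2) * B ζ ζ)
        =o[nhds (0 : ℝ × ℝ)] fun ζ : ℝ × ℝ => ‖ζ‖ ^ 2)
    (hneg : ∀ v : ℝ × ℝ, v ≠ 0 → B v v < 0) :
    ∀ δ : ℝ, 0 < δ → ∃ u : ℝ × ℝ → ℝ, MemU Ω u ∧ (∃ p ∈ Ω, u p ≠ 0) ∧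
      C1Norm Ω u < δ ∧ Fres Ω f u < Fres Ω f (fun _ => 0) :=
  stmt4_general Ω hconv hbdd hint f hf L B hTaylor hneg
end

section
/- Let Ω ⊂ ℝ² be a convex bounded set with nonempty interior whose two vertical support lines are both angular, and let K < ∞ denote the supremum over nonzero u ∈ U_Ω of (∫_Ω u_x² dx dy)/(∫_Ω u_y² dx dy). Let f : ℝ² → ℝ be continuous with f(ζ₁,ζ₂) = f(0,0) + αζ₁ + βζ₂ − aζ₁² + bζ₂² + o(|ζ|²) as |ζ| → 0, where a > 0, b > 0. If b/a < K, then the zero function u ≡ 0 is not a local minimum of the functional F(u) = ∫_Ω f(∇u(x,y)) dx dy on U_Ω with respect to the C¹ norm. -/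
open MeasureTheory Real Set Filter Asymptotics

/-! Pick `u ∈ U_Ω` with `(b/a) ∫ u_y² < ∫ u_x²` and compare `F(εu)` with `F(0)`.
Every `u ∈ U_Ω` satisfies `∫_Ω u_x = ∫_Ω u_y = 0`: on almost every line parallel to an axis, `u`
restricts to a concave function vanishing at both ends of the chord, and a concave function is the
integral of its right derivative. So the linear part of the expansion of `f` integrates to zero and
`F(εu) - F(0) = ε² (b ∫ u_y² - a ∫ u_x²) + o(ε²) < 0`, while `‖εu‖_{C¹} = ε ‖u‖_{C¹} → 0`. -/

open scoped ENNReal Topology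

section
variable {α : Type*} [ConditionallyCompleteLinearOrder α] [TopologicalSpace α] [OrderTopology α]
  [DenselyOrdered α] {s : Set α}

theorem csInf_mem_frontier [NoMinOrder α] (hs : s.Nonempty) (hb : BddBelow s) :
    sInf s ∈ frontier s := by
  refine ⟨csInf_mem_closure hs hb, fun hint => ?_⟩
  obtain ⟨l, hl, hsub⟩ :=
    exists_Ioc_subset_of_mem_nhds (mem_interior_iff_mem_nhds.1 hint) (exists_lt _)
  obtain ⟨m, hlm, hm⟩ := exists_between hl
  exact (csInf_le hb (hsub ⟨hlm, hm.le⟩)).not_gt hm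

theorem csSup_mem_frontier [NoMaxOrder α] (hs : s.Nonempty) (hb : BddAbove s) :
    sSup s ∈ frontier s :=
  csInf_mem_frontier (α := αᵒᵈ) hs hb

end

theorem ConcaveOn.integral_Ioo_eq_sub {g φ : ℝ → ℝ} {A B C : ℝ} (hAB : A ≤ B)
    (hg : ContinuousOn g (Icc A B)) (hconc : ConcaveOn ℝ (Ioo A B) g)
    (hderiv : ∀ᵐ x, x ∈ Ioo A B → HasDerivAt g (φ x) x ∧ |φ x| ≤ C) :
    ∫ x in Ioo A B, φ x = g B - g A := by
  set d : ℝ → ℝ := fun x => derivWithin g (Ioi x) x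
  have hd : ∀ x ∈ Ioo A B, HasDerivWithinAt g (d x) (Ioi x) x := fun x hx => by
    have := (hconc.neg.differentiableWithinAt_Ioi_of_mem_interior
      (by rwa [interior_Ioo])).neg
    exact (by simpa using this : DifferentiableWithinAt ℝ g (Ioi x) x).hasDerivWithinAt
  have hanti : AntitoneOn d (Ioo A B) := fun x hx y hy hxy => by
    have := hconc.neg.monotoneOn_rightDeriv (by rwa [interior_Ioo]) (by rwa [interior_Ioo]) hxy
    simpa [derivWithin.neg] using this
  have hdφ : ∀ᵐ x ∂volume.restrict (Ioo A B), d x = φ x := by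
    rw [ae_restrict_iff' measurableSet_Ioo]
    filter_upwards [hderiv] with x hx hmem
    exact (hx hmem).1.hasDerivWithinAt.derivWithin (uniqueDiffWithinAt_Ioi x)
  have hint : IntervalIntegrable d volume A B := by
    rw [intervalIntegrable_iff_integrableOn_Ioo_of_le hAB]
    refine Integrable.mono' (integrableOn_const (C := C) measure_Ioo_lt_top.ne)
      (aemeasurable_restrict_of_antitoneOn measurableSet_Ioo hanti).aestronglyMeasurable ?_
    rw [ae_restrict_iff' measurableSet_Ioo] at hdφ ⊢
    filter_upwards [hderiv, hdφ] with x hx hdx hmem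
    rw [hdx hmem]
    exact (hx hmem).2
  rw [← intervalIntegral.integral_eq_sub_of_hasDeriv_right_of_le hAB hg hd hint,
    intervalIntegral.integral_of_le hAB, integral_Ioc_eq_integral_Ioo]
  exact integral_congr_ae (hdφ.mono fun x hx => hx.symm)

theorem ConcaveOn.setIntegral_deriv_eq_zero {T : Set ℝ} {g φ : ℝ → ℝ} {C : ℝ}
    (hconv : Convex ℝ T) (hbdd : Bornology.IsBounded T) (hg : ContinuousOn g (closure T))
    (hconc : ConcaveOn ℝ T g) (h0 : ∀ x ∈ frontier T, g x = 0)
    (hderiv : ∀ᵐ x, x ∈ T → HasDerivAt g (φ x) x ∧ |φ x| ≤ C) :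
    ∫ x in T, φ x = 0 := by
  rcases T.eq_empty_or_nonempty with rfl | hne
  · simp
  have hT : Ioo (sInf T) (sSup T) ⊆ T := (hconv.isConnected hne).Ioo_csInf_csSup_subset
    hbdd.bddBelow hbdd.bddAbove
  have hAB : sInf T ≤ sSup T := csInf_le_csSup hne hbdd.bddBelow hbdd.bddAbove
  have hIcc : Icc (sInf T) (sSup T) ⊆ closure T := hconv.closure.ordConnected.out
    (csInf_mem_closure hne hbdd.bddBelow) (csSup_mem_closure hne hbdd.bddAbove)
  have hae : T =ᵐ[volume] Ioo (sInf T) (sSup T) :=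
    ((subset_Icc_csInf_csSup hbdd.bddBelow hbdd.bddAbove).eventuallyLE.trans
      Ioo_ae_eq_Icc.symm.le).antisymm hT.eventuallyLE
  rw [setIntegral_congr_set hae, ConcaveOn.integral_Ioo_eq_sub hAB (hg.mono hIcc)
    (hconc.subset hT (convex_Ioo _ _)) (hderiv.mono fun x hx hxT => hx (hT hxT)),
    h0 _ (csSup_mem_frontier hne hbdd.bddAbove), h0 _ (csInf_mem_frontier hne hbdd.bddBelow),
    sub_zero]

theorem ConcaveOn.integral_indicator_fderiv_line_eq_zero {E : Type*} [NormedAddCommGroup E]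
    [NormedSpace ℝ E] {Ω : Set E} {u : E → ℝ} {C : ℝ} (hconv : Convex ℝ Ω)
    (hbdd : Bornology.IsBounded Ω) (hcont : ContinuousOn u (closure Ω)) (hconc : ConcaveOn ℝ Ω u)
    (hC : ∀ q ∈ Ω, DifferentiableAt ℝ u q → ‖fderiv ℝ u q‖ ≤ C)
    (h0 : ∀ q ∈ frontier Ω, u q = 0) {p v : E} (hv : v ≠ 0)
    (hdiff : ∀ᵐ t : ℝ, p + t • v ∈ Ω → DifferentiableAt ℝ u (p + t • v)) :
    ∫ t : ℝ, Ω.indicator (fun q => fderiv ℝ u q v) (p + t • v) = 0 := by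
  set ℓ : ℝ →ᵃ[ℝ] E := AffineMap.lineMap p (p + v)
  have hℓ : ⇑ℓ = fun t : ℝ => p + t • v := by
    ext t; simp [ℓ, AffineMap.lineMap_apply, add_comm]
  have hℓc : Continuous ℓ := AffineMap.lineMap_continuous
  have hT : Convex ℝ (ℓ ⁻¹' Ω) := hconv.affine_preimage ℓ
  have hTbdd : Bornology.IsBounded (ℓ ⁻¹' Ω) := by
    obtain ⟨R, hR⟩ := isBounded_iff_forall_norm_le.1 hbdd
    refine isBounded_iff_forall_norm_le.2 ⟨(R + ‖p‖) / ‖v‖, fun t ht => ?_⟩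
    rw [le_div_iff₀ (norm_pos_iff.2 hv), ← norm_smul]
    have := hR _ ht
    rw [hℓ] at this
    calc ‖t • v‖ = ‖(p + t • v) - p‖ := by rw [add_sub_cancel_left]
      _ ≤ R + ‖p‖ := (norm_sub_le _ _).trans (by linarith)
  have hderiv : ∀ᵐ t, t ∈ ℓ ⁻¹' Ω → HasDerivAt (u ∘ ℓ) (fderiv ℝ u (ℓ t) v) t ∧
      |fderiv ℝ u (ℓ t) v| ≤ C * ‖v‖ := by
    filter_upwards [hdiff] with t ht hmem
    rw [hℓ] at hmem ⊢
    have hline : HasDerivAt (fun t : ℝ => p + t • v) v t := by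
      simpa using ((hasDerivAt_id t).smul_const v).const_add p
    refine ⟨(ht hmem).hasFDerivAt.comp_hasDerivAt t hline, ?_⟩
    exact ((fderiv ℝ u _).le_opNorm v).trans
      (mul_le_mul_of_nonneg_right (hC _ hmem (ht hmem)) (norm_nonneg v))
  have key := ConcaveOn.setIntegral_deriv_eq_zero hT hTbdd
    (hcont.comp hℓc.continuousOn fun t ht => hℓc.closure_preimage_subset Ω ht)
    (hconc.comp_affineMap ℓ) (fun t ht => h0 _ (hℓc.frontier_preimage_subset Ω ht)) hderiv
  calc ∫ t : ℝ, Ω.indicator (fun q => fderiv ℝ u q v) (p + t • v)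
      = ∫ t, (ℓ ⁻¹' Ω).indicator ((fun q => fderiv ℝ u q v) ∘ ℓ) t := by
        simp only [Set.indicator_comp_right, hℓ]
    _ = 0 := by rwa [integral_indicator₀ (hT.nullMeasurableSet (μ := volume))]

theorem norm_partials_le_norm_fderiv (u : ℝ × ℝ → ℝ) (p : ℝ × ℝ) :
    ‖(uX u p, uY u p)‖ ≤ ‖fderiv ℝ u p‖ := by
  refine max_le ?_ ?_
  · simpa [uX] using (fderiv ℝ u p).le_opNorm (1, 0)
  · simpa [uY] using (fderiv ℝ u p).le_opNorm (0, 1)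

theorem uX_const_mul (ε : ℝ) (u : ℝ × ℝ → ℝ) (p : ℝ × ℝ) :
    uX (fun q => ε * u q) p = ε * uX u p := by
  simp [uX, show (fun q => ε * u q) = ε • u from rfl, fderiv_const_smul_field]

theorem uY_const_mul (ε : ℝ) (u : ℝ × ℝ → ℝ) (p : ℝ × ℝ) :
    uY (fun q => ε * u q) p = ε * uY u p := by
  simp [uY, show (fun q => ε * u q) = ε • u from rfl, fderiv_const_smul_field]

theorem C1Norm_const_mul {Ω : Set (ℝ × ℝ)} {u : ℝ × ℝ → ℝ} {ε : ℝ} (hε : 0 < ε) :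
    C1Norm Ω (fun p => ε * u p) = ε * C1Norm Ω u := by
  have hdiff : ∀ p, DifferentiableAt ℝ (fun q => ε * u q) p ↔ DifferentiableAt ℝ u p := fun p =>
    ⟨fun h => by simpa [hε.ne'] using h.const_mul ε⁻¹, fun h => h.const_mul ε⟩
  have hscale : ∀ (S : Set (ℝ × ℝ)) (w : ℝ × ℝ → ℝ),
      sSup ((fun p => |ε * w p|) '' S) = ε * sSup ((fun p => |w p|) '' S) := fun S w => by
    rw [← smul_eq_mul, ← Real.sSup_smul_of_nonneg hε.le, ← Set.image_smul, Set.image_image]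
    simp_rw [abs_mul, abs_of_pos hε, smul_eq_mul]
  simp only [C1Norm, uX_const_mul, uY_const_mul, hdiff, hscale]
  ring

theorem Fres_zero (Ω : Set (ℝ × ℝ)) (f : ℝ × ℝ → ℝ) :
    Fres Ω f (fun _ => 0) = volume.real Ω * f 0 := by
  simp [Fres, uX, uY, Prod.mk_zero_zero]

namespace MemU

variable {Ω : Set (ℝ × ℝ)} {u : ℝ × ℝ → ℝ}

theorem exists_ae_norm_partials_le (hΩ : NullMeasurableSet Ω volume) (hu : MemU Ω u) :
    ∃ C, ∀ᵐ p ∂volume.restrict Ω, ‖(uX u p, uY u p)‖ ≤ C := by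
  obtain ⟨-, -, hdiff, ⟨C, hC⟩, -⟩ := hu
  refine ⟨C, ?_⟩
  filter_upwards [hdiff, ae_restrict_mem₀ hΩ] with p hd hp
  exact (norm_partials_le_norm_fderiv u p).trans (hC p hp hd)

theorem integrableOn_comp_partials (hΩ : NullMeasurableSet Ω volume) (hfin : volume Ω ≠ ∞)
    (hu : MemU Ω u) {g : ℝ × ℝ → ℝ} (hg : Continuous g) :
    IntegrableOn (fun p => g (uX u p, uY u p)) Ω := by
  obtain ⟨C, hC⟩ := hu.exists_ae_norm_partials_le hΩ
  obtain ⟨M, hM⟩ := (isCompact_closedBall (0 : ℝ × ℝ) C).exists_bound_of_continuousOn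
    hg.continuousOn
  have := isFiniteMeasure_restrict.2 hfin
  refine Integrable.of_bound (hg.measurable.comp ((measurable_fderiv_apply_const ℝ u _).prodMk
    (measurable_fderiv_apply_const ℝ u _))).aestronglyMeasurable M ?_
  filter_upwards [hC] with p hp
  exact hM _ (mem_closedBall_zero_iff.2 hp)

theorem setIntegral_uY_eq_zero (hconv : Convex ℝ Ω) (hbdd : Bornology.IsBounded Ω)
    (hu : MemU Ω u) : ∫ p in Ω, uY u p = 0 := by
  have hΩ : NullMeasurableSet Ω volume := hconv.nullMeasurableSet (μ := volume)
  have hint : Integrable (Ω.indicator (uY u)) (volume.prod volume) :=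
    (hu.integrableOn_comp_partials hΩ hbdd.measure_lt_top.ne continuous_snd).integrable_indicator₀
      hΩ
  obtain ⟨hcont, hconc, hdiff, ⟨C, hC⟩, h0⟩ := hu
  have hslices : ∀ᵐ x : ℝ, ∀ᵐ y : ℝ, (x, y) ∈ Ω → DifferentiableAt ℝ u (x, y) :=
    Measure.ae_ae_of_ae_prod ((ae_restrict_iff'₀ hΩ).1 hdiff)
  rw [← integral_indicator₀ hΩ, Measure.volume_eq_prod, integral_prod _ hint]
  refine integral_eq_zero_of_ae ?_
  filter_upwards [hslices] with x hx
  have := ConcaveOn.integral_indicator_fderiv_line_eq_zero hconv hbdd hcont hconc hC h0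
    (p := (x, 0)) (v := (0, 1)) (by simp) (by simpa using hx)
  simp only [Prod.smul_mk, smul_eq_mul, mul_zero, mul_one, Prod.mk_add_mk, add_zero, zero_add]
    at this
  exact this

theorem setIntegral_uX_eq_zero (hconv : Convex ℝ Ω) (hbdd : Bornology.IsBounded Ω)
    (hu : MemU Ω u) : ∫ p in Ω, uX u p = 0 := by
  have hΩ : NullMeasurableSet Ω volume := hconv.nullMeasurableSet (μ := volume)
  have hint : Integrable (Ω.indicator (uX u)) (volume.prod volume) :=
    (hu.integrableOn_comp_partials hΩ hbdd.measure_lt_top.ne continuous_fst).integrable_indicator₀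
      hΩ
  obtain ⟨hcont, hconc, hdiff, ⟨C, hC⟩, h0⟩ := hu
  have hslices : ∀ᵐ y : ℝ, ∀ᵐ x : ℝ, (x, y) ∈ Ω → DifferentiableAt ℝ u (x, y) :=
    Measure.ae_ae_of_ae_prod (Measure.measurePreserving_swap.quasiMeasurePreserving.ae
      ((ae_restrict_iff'₀ hΩ).1 hdiff))
  rw [← integral_indicator₀ hΩ, Measure.volume_eq_prod, integral_prod_symm _ hint]
  refine integral_eq_zero_of_ae ?_
  filter_upwards [hslices] with y hy
  have := ConcaveOn.integral_indicator_fderiv_line_eq_zero hconv hbdd hcont hconc hC h0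
    (p := (0, y)) (v := (1, 0)) (by simp) (by simpa using hy)
  simp only [Prod.smul_mk, smul_eq_mul, mul_zero, mul_one, Prod.mk_add_mk, add_zero, zero_add]
    at this
  exact this

theorem const_mul {ε : ℝ} (hu : MemU Ω u) (hε : 0 < ε) :
    MemU Ω (fun p => ε * u p) := by
  obtain ⟨hcont, hconc, hdiff, ⟨C, hC⟩, h0⟩ := hu
  refine ⟨continuousOn_const.mul hcont, hconc.smul hε.le, hdiff.mono fun p hp => hp.const_mul ε,
    ⟨ε * C, fun p hp hd => ?_⟩, fun p hp => by simp [h0 p hp]⟩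
  have hdu : DifferentiableAt ℝ u p := by simpa [hε.ne'] using hd.const_mul ε⁻¹
  rw [fderiv_const_mul hdu, norm_smul, Real.norm_of_nonneg hε.le]
  exact mul_le_mul_of_nonneg_left (hC p hp hdu) hε.le

theorem Fres_const_mul (hconv : Convex ℝ Ω)
    (hbdd : Bornology.IsBounded Ω) (hu : MemU Ω u) {f R : ℝ × ℝ → ℝ} {α β a b : ℝ}
    (hR : Continuous R)
    (hf : ∀ ζ : ℝ × ℝ, f ζ = f 0 + α * ζ.1 + β * ζ.2 - a * ζ.1 ^ 2 + b * ζ.2 ^ 2 + R ζ) (ε : ℝ) :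
    Fres Ω f (fun p => ε * u p) = volume.real Ω * f 0 + ε ^ 2 * (b * Iy Ω u - a * Ix Ω u) +
      ∫ p in Ω, R (ε • (uX u p, uY u p)) := by
  have hI : ∀ g : ℝ × ℝ → ℝ, Continuous g → IntegrableOn (fun p => g (uX u p, uY u p)) Ω :=
    fun g hg => hu.integrableOn_comp_partials (hconv.nullMeasurableSet (μ := volume))
      hbdd.measure_lt_top.ne hg
  have hlin : IntegrableOn (fun p => α * uX u p + β * uY u p) Ω :=
    hI (fun ζ => α * ζ.1 + β * ζ.2) (by fun_prop)
  have hquad : IntegrableOn (fun p => b * uY u p ^ 2 - a * uX u p ^ 2) Ω :=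
    hI (fun ζ => b * ζ.2 ^ 2 - a * ζ.1 ^ 2) (by fun_prop)
  have hrem : IntegrableOn (fun p => R (ε • (uX u p, uY u p))) Ω :=
    hI (fun ζ => R (ε • ζ)) (by fun_prop)
  have hlin0 : ∫ p in Ω, (α * uX u p + β * uY u p) = 0 := by
    rw [integral_add ((hI _ continuous_fst).const_mul α) ((hI _ continuous_snd).const_mul β),
      integral_const_mul, integral_const_mul, hu.setIntegral_uX_eq_zero hconv hbdd,
      hu.setIntegral_uY_eq_zero hconv hbdd]
    ring
  have hquad_eq : ∫ p in Ω, (b * uY u p ^ 2 - a * uX u p ^ 2) = b * Iy Ω u - a * Ix Ω u := by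
    rw [integral_sub ((hI (fun ζ => ζ.2 ^ 2) (by fun_prop)).const_mul b)
      ((hI (fun ζ => ζ.1 ^ 2) (by fun_prop)).const_mul a), integral_const_mul, integral_const_mul]
    rfl
  have hpt : ∀ p, f (uX (fun q => ε * u q) p, uY (fun q => ε * u q) p) = f 0 +
      ε * (α * uX u p + β * uY u p) + ε ^ 2 * (b * uY u p ^ 2 - a * uX u p ^ 2) +
      R (ε • (uX u p, uY u p)) := fun p => by
    rw [uX_const_mul, uY_const_mul, hf, Prod.smul_mk, smul_eq_mul, smul_eq_mul]
    ring
  have hconst : IntegrableOn (fun _ => f 0) Ω := integrableOn_const hbdd.measure_lt_top.ne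
  have h1 : IntegrableOn (fun p => f 0 + ε * (α * uX u p + β * uY u p)) Ω :=
    hconst.add (hlin.const_mul ε)
  have h2 : IntegrableOn (fun p => f 0 + ε * (α * uX u p + β * uY u p) +
      ε ^ 2 * (b * uY u p ^ 2 - a * uX u p ^ 2)) Ω := h1.add (hquad.const_mul _)
  rw [Fres, funext hpt, integral_add h2 hrem, integral_add h1 (hquad.const_mul _),
    integral_add hconst (hlin.const_mul ε), integral_const_mul, integral_const_mul, hlin0,
    hquad_eq, setIntegral_const, smul_eq_mul]
  ring

end MemU

theorem isLittleO_integral_comp_smul {X E F : Type*} [MeasurableSpace X] {μ : Measure X}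
    [IsFiniteMeasure μ] [NormedAddCommGroup E] [NormedSpace ℝ E] [NormedAddCommGroup F]
    [NormedSpace ℝ F] {R : E → F} (hR : R =o[𝓝 0] fun ζ => ‖ζ‖ ^ 2) {G : X → E} {C : ℝ}
    (hG : ∀ᵐ x ∂μ, ‖G x‖ ≤ C) :
    (fun ε : ℝ => ∫ x, R (ε • G x) ∂μ) =o[𝓝 0] fun ε => ε ^ 2 := by
  refine IsLittleO.of_bound fun c hc => ?_
  set η := c / (C ^ 2 * μ.real univ + 1)
  have hη : 0 < η := by positivity
  obtain ⟨r, hr, hRr⟩ := Metric.eventually_nhds_iff.1 (hR.def hη)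
  have hsmall : ∀ᶠ ε : ℝ in 𝓝 0, |ε| * |C| < r :=
    (((continuous_abs.mul continuous_const).tendsto' 0 0 (by simp)).eventually (gt_mem_nhds hr))
  filter_upwards [hsmall] with ε hε
  have hbound : ∀ᵐ x ∂μ, ‖R (ε • G x)‖ ≤ η * (ε ^ 2 * C ^ 2) := by
    filter_upwards [hG] with x hx
    have hnorm : ‖ε • G x‖ ≤ |ε| * |C| := by
      rw [norm_smul, Real.norm_eq_abs]
      exact mul_le_mul_of_nonneg_left (hx.trans (le_abs_self C)) (abs_nonneg ε)
    calc ‖R (ε • G x)‖ ≤ η * ‖‖ε • G x‖ ^ 2‖ :=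
          hRr (by rw [dist_zero_right]; exact hnorm.trans_lt hε)
      _ ≤ η * (ε ^ 2 * C ^ 2) := by
          rw [norm_pow, norm_norm, ← sq_abs ε, ← sq_abs C, ← mul_pow]
          gcongr
  calc ‖∫ x, R (ε • G x) ∂μ‖ ≤ η * (ε ^ 2 * C ^ 2) * μ.real univ :=
        norm_integral_le_of_norm_le_const hbound
    _ = ε ^ 2 * (η * (C ^ 2 * μ.real univ)) := by ring
    _ ≤ ε ^ 2 * c := by
        gcongr
        rw [div_mul_eq_mul_div, div_le_iff₀ (by positivity)]
        nlinarith [measureReal_nonneg (μ := μ) (s := univ), sq_nonneg C]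
    _ = c * ‖ε ^ 2‖ := by rw [Real.norm_of_nonneg (sq_nonneg ε), mul_comm]

theorem eventually_mul_sq_add_neg {c : ℝ} {ρ : ℝ → ℝ} (hc : c < 0)
    (hρ : ρ =o[𝓝 0] fun ε => ε ^ 2) : ∀ᶠ ε in 𝓝[≠] 0, c * ε ^ 2 + ρ ε < 0 := by
  filter_upwards [nhdsWithin_le_nhds (hρ.def (show 0 < -c / 2 by linarith)),
    self_mem_nhdsWithin] with ε hbound (hε : ε ≠ 0)
  have hpos : 0 < ε ^ 2 := by positivity
  rw [Real.norm_of_nonneg hpos.le, Real.norm_eq_abs] at hbound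
  nlinarith [le_abs_self (ρ ε)]

theorem stmt6_general (Ω : Set (ℝ × ℝ)) (hconv : Convex ℝ Ω) (hbdd : Bornology.IsBounded Ω)
    (K : ℝ)
    (hKlub : ∀ K' : ℝ, K' < K → ∃ u : ℝ × ℝ → ℝ, MemU Ω u ∧ (∃ p ∈ Ω, u p ≠ 0) ∧
      K' * Iy Ω u < Ix Ω u)
    (f : ℝ × ℝ → ℝ) (hf : Continuous f) (α β a b : ℝ) (ha : 0 < a)
    (hTaylor : (fun ζ : ℝ × ℝ =>
        f ζ - (f 0 + α * ζ.1 + β * ζ.2 - a * ζ.1 ^ 2 + b * ζ.2 ^ 2))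
        =o[nhds (0 : ℝ × ℝ)] fun ζ : ℝ × ℝ => ‖ζ‖ ^ 2)
    (hba : b / a < K) :
    ¬ ZeroIsLocalMin Ω f := by
  rintro ⟨δ, hδ, hmin⟩
  obtain ⟨u, hu, -, hlt⟩ := hKlub (b / a) hba
  have hgap : b * Iy Ω u - a * Ix Ω u < 0 := by
    have := mul_lt_mul_of_pos_left hlt ha
    rw [← mul_assoc, mul_div_cancel₀ _ ha.ne'] at this
    linarith
  set R := fun ζ : ℝ × ℝ => f ζ - (f 0 + α * ζ.1 + β * ζ.2 - a * ζ.1 ^ 2 + b * ζ.2 ^ 2)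
  have hexp := hu.Fres_const_mul (f := f) (R := R) (α := α) (β := β) (a := a) (b := b) hconv hbdd
    (by fun_prop) (fun ζ => by ring)
  have : IsFiniteMeasure (volume.restrict Ω) :=
    isFiniteMeasure_restrict.2 hbdd.measure_lt_top.ne
  obtain ⟨C, hC⟩ := hu.exists_ae_norm_partials_le (hconv.nullMeasurableSet (μ := volume))
  have hdecrease := (eventually_mul_sq_add_neg hgap (isLittleO_integral_comp_smul hTaylor hC))
    |>.filter_mono (nhdsGT_le_nhdsNE 0)
  have hnear : ∀ᶠ ε in 𝓝[>] 0, ε * C1Norm Ω u < δ :=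
    nhdsWithin_le_nhds (((continuous_mul_const _).tendsto' 0 0 (zero_mul _)).eventually
      (gt_mem_nhds hδ))
  obtain ⟨ε, hdec, hnear, hε⟩ := (hdecrease.and (hnear.and self_mem_nhdsWithin)).exists
  have := hmin _ (hu.const_mul hε) (by rwa [C1Norm_const_mul hε])
  rw [Fres_zero, hexp] at this
  linarith

/-- Both vertical support lines angular, `K` the (finite) supremum of
`(∫_Ω u_x²)/(∫_Ω u_y²)` over nonzero `u ∈ U_Ω`. If
`f(ζ) = f(0) + αζ₁ + βζ₂ - aζ₁² + bζ₂² + o(|ζ|²)` with `a, b > 0` and `b/a < K`,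
then `u ≡ 0` is not a local minimum. -/
theorem stmt6 (Ω : Set (ℝ × ℝ)) (hconv : Convex ℝ Ω) (hbdd : Bornology.IsBounded Ω)
    (hint : (interior Ω).Nonempty)
    (hangL : AngularSupportAt Ω (leftX Ω)) (hangR : AngularSupportAt Ω (rightX Ω))
    (K : ℝ) (hK0 : 0 < K)
    (hKub : ∀ u : ℝ × ℝ → ℝ, MemU Ω u → Ix Ω u ≤ K * Iy Ω u)
    (hKlub : ∀ K' : ℝ, K' < K → ∃ u : ℝ × ℝ → ℝ, MemU Ω u ∧ (∃ p ∈ Ω, u p ≠ 0) ∧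
      K' * Iy Ω u < Ix Ω u)
    (f : ℝ × ℝ → ℝ) (hf : Continuous f) (α β a b : ℝ) (ha : 0 < a) (hb : 0 < b)
    (hTaylor : (fun ζ : ℝ × ℝ =>
        f ζ - (f 0 + α * ζ.1 + β * ζ.2 - a * ζ.1 ^ 2 + b * ζ.2 ^ 2))
        =o[nhds (0 : ℝ × ℝ)] fun ζ : ℝ × ℝ => ‖ζ‖ ^ 2)
    (hba : b / a < K) :
    ¬ ZeroIsLocalMin Ω f :=
  stmt6_general Ω hconv hbdd K hKlub f hf α β a b ha hTaylor hba
end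

section
/- Let Ω ⊂ ℝ² be a convex bounded set with nonempty interior containing the points O = (0,0) and D = (2,0), whose projection onto the x-axis is the segment [0,2]. Let u : Ω → ℝ be a continuous concave function with u = 0 on ∂Ω (hence u ≥ 0 on Ω). Then at every point (x,y) ∈ Ω with 0 < x ≤ 1 at which u is differentiable, one has |u_x(x,y)| ≤ (1/x)·( u(x,y) − y·u_y(x,y) ). -/
open MeasureTheory Real Set Filter Asymptotics

/-- The tangent plane of a concave function at a point of differentiability lies above
the graph. -/
lemma tangent_above {Ω : Set (ℝ × ℝ)} {u : ℝ × ℝ → ℝ} (hconc : ConcaveOn ℝ Ω u)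
    {p q : ℝ × ℝ} (hp : p ∈ Ω) (hq : q ∈ Ω) (hd : DifferentiableAt ℝ u p) :
    u q ≤ u p + fderiv ℝ u p (q - p) := by
  have hline := (hd.hasFDerivAt.hasLineDerivAt (q - p)).tendsto_slope_zero_right
  have key : u q - u p ≤ fderiv ℝ u p (q - p) := by
    refine ge_of_tendsto hline ?_
    filter_upwards [Ioo_mem_nhdsGT_of_mem (Set.left_mem_Ico.2 one_pos)] with t ht
    have ht0 : 0 < t := ht.1
    have ht1 : t < 1 := ht.2
    have hmem : p + t • (q - p) = (1 - t) • p + t • q := by module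
    have hcc := hconc.2 hp hq (by linarith : (0:ℝ) ≤ 1 - t) ht0.le (by ring)
    rw [hmem]
    have : (1 - t) * u p + t * u q ≤ u ((1 - t) • p + t • q) := hcc
    have h2 : t * (u q - u p) ≤ u ((1 - t) • p + t • q) - u p := by nlinarith
    calc u q - u p = t⁻¹ * (t * (u q - u p)) := by field_simp
      _ ≤ t⁻¹ * (u ((1 - t) • p + t • q) - u p) := by
          apply mul_le_mul_of_nonneg_left h2 (by positivity)
      _ = t⁻¹ • (u ((1 - t) • p + t • q) - u p) := rfl
  linarith

lemma fderiv_eval (u : ℝ × ℝ → ℝ) (p : ℝ × ℝ) (a b : ℝ) :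
    fderiv ℝ u p (a, b) = a * uX u p + b * uY u p := by
  have : (a, b) = a • ((1:ℝ), (0:ℝ)) + b • ((0:ℝ), (1:ℝ)) := by
    simp [Prod.ext_iff]
  rw [this, map_add, _root_.map_smul, _root_.map_smul, uX, uY]
  simp [smul_eq_mul]

/-- Lemma 1: for `Ω` containing `O = (0,0)` and `D = (2,0)` with projection `[0,2]`
on the `x`-axis, and `u` continuous concave on `Ω` vanishing on `∂Ω`, at every point of
differentiability `(x,y) ∈ Ω` with `0 < x ≤ 1` one has
`|u_x| ≤ (1/x)(u - y·u_y)`. -/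
theorem stmt9 (Ω : Set (ℝ × ℝ)) (hconv : Convex ℝ Ω) (hbdd : Bornology.IsBounded Ω)
    (hint : (interior Ω).Nonempty)
    (hO : ((0 : ℝ), (0 : ℝ)) ∈ Ω) (hD : ((2 : ℝ), (0 : ℝ)) ∈ Ω)
    (hproj : Prod.fst '' Ω = Icc (0 : ℝ) 2)
    (u : ℝ × ℝ → ℝ) (hcont : ContinuousOn u (closure Ω)) (hconc : ConcaveOn ℝ Ω u)
    (hbdry : ∀ p ∈ frontier Ω, u p = 0) (hnonneg : ∀ p ∈ Ω, 0 ≤ u p) :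
    ∀ p ∈ Ω, 0 < p.1 → p.1 ≤ 1 → DifferentiableAt ℝ u p →
      |uX u p| ≤ (1 / p.1) * (u p - p.2 * uY u p) := by
  intro p hp hx0 hx1 hd
  obtain ⟨x, y⟩ := p
  simp only at hx0 hx1 ⊢
  set A := uX u ((x, y)) with hA
  set B := uY u ((x, y)) with hB
  -- tangent plane above graph at O and D
  have hO' : (0:ℝ) ≤ u ((x, y)) + fderiv ℝ u ((x, y)) (((0:ℝ),(0:ℝ)) - (x, y)) :=
    le_trans (hnonneg _ hO) (tangent_above hconc hp hO hd)
  have hD' : (0:ℝ) ≤ u ((x, y)) + fderiv ℝ u ((x, y)) (((2:ℝ),(0:ℝ)) - (x, y)) :=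
    le_trans (hnonneg _ hD) (tangent_above hconc hp hD hd)
  have e1 : (((0:ℝ),(0:ℝ)) - ((x:ℝ), y)) = ((-x, -y) : ℝ × ℝ) := by
    simp [Prod.ext_iff]
  have e2 : (((2:ℝ),(0:ℝ)) - ((x:ℝ), y)) = ((2 - x, -y) : ℝ × ℝ) := by
    simp [Prod.ext_iff]
  rw [e1, fderiv_eval] at hO'
  rw [e2, fderiv_eval] at hD'
  -- hO' : 0 ≤ u p + (-x) * A + (-y) * B, i.e. x*A ≤ u p - y*B
  -- hD' : 0 ≤ u p + (2-x) * A + (-y) * B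
  set S := u ((x, y)) - y * B with hS
  have h1 : x * A ≤ S := by rw [hS]; linarith
  have h2 : -(2 - x) * A ≤ S := by rw [hS]; linarith
  have hSnn : 0 ≤ S := by nlinarith [mul_le_mul_of_nonneg_left h1 (by linarith : (0:ℝ) ≤ 2 - x), mul_le_mul_of_nonneg_left h2 hx0.le]
  have habs : |A| ≤ S / x := by
    rw [le_div_iff₀ hx0]
    rcases abs_cases A with ⟨hc, _⟩ | ⟨hc, hneg⟩
    · rw [hc]; linarith [h1]
    · rw [hc]; nlinarith
  calc |A| ≤ S / x := habs
    _ = (1 / x) * S := by ring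
    _ = (1 / x) * (u ((x, y)) - y * B) := by rw [hS]
end

section
/- Let Ω ⊂ ℝ² be a convex bounded set with nonempty interior, let u ∈ U_Ω attain its maximum value 1 at a point ξ₀ ∈ Ω, and let ũ be the smallest function in U_Ω with ũ(ξ₀) = 1 (the cone function whose graph consists of the segments joining (ξ₀, 1) to ∂Ω × {0}). Then ∫_Ω u_y² dx dy ≥ ∫_Ω ũ_y² dx dy. -/
/-!
Minimality gives `ũ ≤ u` on `Ω`, and pointwise `u_y² - ũ_y² ≥ 2 ũ_y (u - ũ)_y`, so it suffices
to show `∫_Ω ũ_y (u - ũ)_y ≥ 0`. By Fubini this reduces to the vertical chords `(A, B)` of `Ω`: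
on each of them `G = ũ(x, ·)` is concave and `D = (u - ũ)(x, ·)` is nonnegative, Lipschitz and
vanishes at `A` and `B`. Then `∫ G' D' ≥ 0`: replace `G'` by the divided differences of `G`,
which are antitone, integrate by parts, and let the step tend to `0`. The Lipschitz bounds
come from concavity together with the almost-everywhere bound on the gradient.
-/

open MeasureTheory Real Set Filter Asymptotics

open NNReal Topology

section DividedDifference

variable {G D : ℝ → ℝ} {a b h : ℝ} {K L : ℝ≥0}

lemma LipschitzOnWith.abs_divided_difference_le {s : Set ℝ} {y : ℝ}
    (hG : LipschitzOnWith K G s) (hy : y ∈ s) (hyh : y + h ∈ s) (hh : 0 < h) :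
    |h⁻¹ * (G (y + h) - G y)| ≤ K := by
  have := hG.dist_le_mul (y + h) hyh y hy
  rw [Real.dist_eq, Real.dist_eq, add_sub_cancel_left, abs_of_pos hh] at this
  rw [abs_mul, abs_inv, abs_of_pos hh, inv_mul_le_iff₀ hh]
  linarith

lemma LipschitzOnWith.absolutelyContinuousOnInterval_divided_difference
    (hG : LipschitzOnWith K G (Icc a b)) (hh : 0 ≤ h) (hab : a ≤ b - h) :
    AbsolutelyContinuousOnInterval (fun y => h⁻¹ * (G (y + h) - G y)) a (b - h) := by
  have hsub : Icc a (b - h) ⊆ Icc a b := Icc_subset_Icc_right (by linarith)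
  have hmaps : MapsTo (IsometryEquiv.addRight h) (Icc a (b - h)) (Icc a b) :=
    fun y hy => ⟨show a ≤ y + h by linarith [hy.1], show y + h ≤ b by linarith [hy.2]⟩
  have hshift := hG.comp (IsometryEquiv.addRight h).isometry.lipschitz.lipschitzOnWith hmaps
  rw [mul_one, ← uIcc_of_le hab] at hshift
  have hG' : LipschitzOnWith K G (uIcc a (b - h)) := by
    rw [uIcc_of_le hab]; exact hG.mono hsub
  exact (hshift.absolutelyContinuousOnInterval.sub hG'.absolutelyContinuousOnInterval).const_mul _

lemma ConcaveOn.antitoneOn_divided_difference (hG : ConcaveOn ℝ (Ioo a b) G) (hh : 0 < h) :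
    AntitoneOn (fun y => h⁻¹ * (G (y + h) - G y)) (Ioo a (b - h)) := by
  intro y hy y' hy' hyy'
  have hmem : ∀ t ∈ Ioo a (b - h), t ∈ Ioo a b ∧ t + h ∈ Ioo a b := fun t ht =>
    ⟨⟨ht.1, by linarith [ht.2]⟩, ⟨by linarith [ht.1], by linarith [ht.2]⟩⟩
  have hslope : ∀ t, h⁻¹ * (G (t + h) - G t) = slope G t (t + h) := fun t => by
    rw [slope_def_field, add_sub_cancel_left, inv_mul_eq_div]
  simp only [hslope]
  calc slope G y' (y' + h) = slope G (y' + h) y' := slope_comm _ _ _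
    _ ≤ slope G (y' + h) y :=
        hG.antitoneOn_slope_lt (hmem y' hy').2 ⟨(hmem y hy).1, by linarith⟩
          ⟨(hmem y' hy').1, by linarith⟩ hyy'
    _ = slope G y (y' + h) := slope_comm _ _ _
    _ ≤ slope G y (y + h) :=
        hG.antitoneOn_slope_gt (hmem y hy).1 ⟨(hmem y hy).2, by linarith⟩
          ⟨(hmem y' hy').2, by linarith⟩ (by linarith)

/-- Integrating by parts moves the derivative onto the divided difference of `G`, which is
antitone by concavity; only the boundary term at `b - h` survives, and it is `O(h)`. -/
lemma integral_divided_difference_mul_deriv_ge (hG : ConcaveOn ℝ (Ioo a b) G)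
    (hGlip : LipschitzOnWith K G (Icc a b)) (hDlip : LipschitzOnWith L D (Icc a b))
    (hD : ∀ y ∈ Ioo a b, 0 ≤ D y) (hDa : D a = 0) (hDb : D b = 0) (hh : 0 < h)
    (hhb : h ≤ b - a) :
    -(K * L * h) ≤ ∫ y in a..b - h, h⁻¹ * (G (y + h) - G y) * deriv D y := by
  set Q : ℝ → ℝ := fun y => h⁻¹ * (G (y + h) - G y)
  have hab : a ≤ b - h := by linarith
  have hsub : Icc a (b - h) ⊆ Icc a b := Icc_subset_Icc_right (by linarith)
  have hDac : AbsolutelyContinuousOnInterval D a (b - h) := by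
    refine LipschitzOnWith.absolutelyContinuousOnInterval (K := L) ?_
    rw [uIcc_of_le hab]; exact hDlip.mono hsub
  have hQac := hGlip.absolutelyContinuousOnInterval_divided_difference hh.le hab
  rw [hQac.integral_mul_deriv_eq_deriv_mul hDac, hDa, mul_zero, sub_zero]
  have hbulk : ∫ y in a..b - h, deriv Q y * D y ≤ 0 := by
    rw [intervalIntegral.integral_of_le hab, integral_Ioc_eq_integral_Ioo]
    refine setIntegral_nonpos measurableSet_Ioo fun y hy => ?_
    have hQ' : deriv Q y ≤ 0 := by
      rw [← derivWithin_of_isOpen isOpen_Ioo hy]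
      exact (hG.antitoneOn_divided_difference hh).derivWithin_nonpos
    exact mul_nonpos_of_nonpos_of_nonneg hQ' (hD y ⟨hy.1, by linarith [hy.2]⟩)
  have hend : |Q (b - h) * D (b - h)| ≤ K * L * h := by
    have hbh : b - h ∈ Icc a b := hsub (right_mem_Icc.2 hab)
    have hb : b ∈ Icc a b := right_mem_Icc.2 (by linarith)
    have hQend : |Q (b - h)| ≤ K :=
      hGlip.abs_divided_difference_le hbh (by rwa [sub_add_cancel]) hh
    have hDend : |D (b - h)| ≤ L * h := by
      simpa [Real.dist_eq, hDb, abs_of_pos hh] using hDlip.dist_le_mul (b - h) hbh b hb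
    rw [abs_mul, mul_assoc]
    exact mul_le_mul hQend hDend (abs_nonneg _) K.2
  linarith [neg_abs_le (Q (b - h) * D (b - h))]

lemma abs_divided_difference_mul_deriv_le (hGlip : LipschitzOnWith K G (Icc a b))
    (hDlip : LipschitzOnWith L D (Icc a b)) (hh : 0 < h) {y : ℝ} (hy : y ∈ Ioo a (b - h)) :
    |h⁻¹ * (G (y + h) - G y) * deriv D y| ≤ K * L := by
  have hyab : y ∈ Ioo a b := ⟨hy.1, by linarith [hy.2]⟩
  have hyh : y + h ∈ Icc a b := ⟨by linarith [hy.1], by linarith [hy.2]⟩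
  rw [abs_mul]
  exact mul_le_mul (hGlip.abs_divided_difference_le (Ioo_subset_Icc_self hyab) hyh hh)
    (norm_deriv_le_of_lipschitzOn (Icc_mem_nhds hyab.1 hyab.2) hDlip) (abs_nonneg _) K.2

lemma tendsto_integral_divided_difference_mul_deriv (hab : a < b)
    (hGlip : LipschitzOnWith K G (Icc a b)) (hDlip : LipschitzOnWith L D (Icc a b)) :
    Tendsto (fun h => ∫ y in a..b - h, h⁻¹ * (G (y + h) - G y) * deriv D y) (𝓝[>] 0)
      (𝓝 (∫ y in a..b, deriv G y * deriv D y)) := by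
  set F : ℝ → ℝ → ℝ := fun h =>
    (Ioo a (b - h)).indicator fun y => h⁻¹ * (G (y + h) - G y) * deriv D y
  have hsmall : ∀ᶠ h in 𝓝[>] (0 : ℝ), h ∈ Ioo 0 (b - a) := Ioo_mem_nhdsGT (sub_pos.2 hab)
  have hF : ∀ᶠ h in 𝓝[>] (0 : ℝ), ∫ y in Ioo a b, F h y =
      ∫ y in a..b - h, h⁻¹ * (G (y + h) - G y) * deriv D y := by
    filter_upwards [hsmall] with h hh
    rw [intervalIntegral.integral_of_le (by linarith [hh.2]), integral_Ioc_eq_integral_Ioo,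
      setIntegral_indicator measurableSet_Ioo, Ioo_inter_Ioo, max_self,
      min_eq_right (by linarith [hh.1])]
  rw [intervalIntegral.integral_of_le hab.le, integral_Ioc_eq_integral_Ioo]
  refine Tendsto.congr' hF ?_
  have : IsFiniteMeasure (volume.restrict (Ioo a b)) :=
    isFiniteMeasure_restrict.2 measure_Ioo_lt_top.ne
  refine tendsto_integral_filter_of_dominated_convergence (fun _ => K * L) ?_ ?_
    (integrable_const _) ?_
  · filter_upwards [hsmall] with h hh
    have hQ := (hGlip.absolutelyContinuousOnInterval_divided_difference hh.1.le
      (by linarith [hh.2])).continuousOn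
    rw [uIcc_of_le (by linarith [hh.2])] at hQ
    rw [aestronglyMeasurable_indicator_iff measurableSet_Ioo,
      Measure.restrict_restrict measurableSet_Ioo]
    refine AEStronglyMeasurable.mono_measure ?_
      (Measure.restrict_mono (inter_subset_left.trans Ioo_subset_Icc_self) le_rfl)
    exact (hQ.aestronglyMeasurable measurableSet_Icc).mul (measurable_deriv D).aestronglyMeasurable
  · filter_upwards [hsmall] with h hh
    refine Eventually.of_forall fun y => ?_
    by_cases hy : y ∈ Ioo a (b - h)
    · simpa only [F, indicator_of_mem hy, Real.norm_eq_abs] using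
        abs_divided_difference_mul_deriv_le hGlip hDlip hh.1 hy
    · simp only [F, indicator_of_notMem hy, norm_zero]
      positivity
  · have hGdiff : ∀ᵐ y, y ∈ uIcc a b → DifferentiableAt ℝ G y := by
      refine LipschitzOnWith.absolutelyContinuousOnInterval (K := K) ?_ |>.ae_differentiableAt
      rwa [uIcc_of_le hab.le]
    rw [ae_restrict_iff' measurableSet_Ioo]
    filter_upwards [hGdiff] with y hyd hy
    have hyI : y ∈ uIcc a b := by rw [uIcc_of_le hab.le]; exact Ioo_subset_Icc_self hy
    have hslope := (hyd hyI).hasDerivAt.tendsto_slope_zero_right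
    simp only [smul_eq_mul] at hslope
    refine (hslope.mul_const _).congr' ?_
    filter_upwards [Ioo_mem_nhdsGT (sub_pos.2 hy.2)] with h hh
    have hyh : y ∈ Ioo a (b - h) := ⟨hy.1, by linarith [hh.2]⟩
    simp only [F, indicator_of_mem hyh]

theorem integral_deriv_mul_deriv_nonneg_of_concaveOn (hab : a < b)
    (hG : ConcaveOn ℝ (Ioo a b) G) (hGlip : LipschitzOnWith K G (Icc a b))
    (hDlip : LipschitzOnWith L D (Icc a b)) (hD : ∀ y ∈ Ioo a b, 0 ≤ D y) (hDa : D a = 0)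
    (hDb : D b = 0) :
    0 ≤ ∫ y in a..b, deriv G y * deriv D y := by
  have hlow : Tendsto (fun h : ℝ => -(K * L * h)) (𝓝[>] 0) (𝓝 0) := by
    have : Continuous (fun h : ℝ => -(K * L * h)) := by fun_prop
    simpa using tendsto_nhdsWithin_of_tendsto_nhds (this.tendsto 0)
  refine le_of_tendsto_of_tendsto hlow
    (tendsto_integral_divided_difference_mul_deriv hab hGlip hDlip) ?_
  filter_upwards [Ioc_mem_nhdsGT (sub_pos.2 hab)] with h hh
  exact integral_divided_difference_mul_deriv_ge hG hGlip hDlip hD hDa hDb hh.1 hh.2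

end DividedDifference

section Lipschitz

variable {E : Type*} [NormedAddCommGroup E] [NormedSpace ℝ E] {Ω : Set E} {w : E → ℝ}

lemma ConcaveOn.le_add_fderiv (hw : ConcaveOn ℝ Ω w) {r z : E} (hr : r ∈ Ω) (hz : z ∈ Ω)
    (hd : DifferentiableAt ℝ w r) : w z ≤ w r + fderiv ℝ w r (z - r) := by
  set ℓ : ℝ →ᵃ[ℝ] E := AffineMap.lineMap r z
  have hφ : ConcaveOn ℝ (Icc 0 1) (w ∘ ℓ) :=
    (hw.comp_affineMap ℓ).subset (fun _ hs => hw.1.lineMap_mem hr hz hs) (convex_Icc 0 1)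
  have hd' : HasDerivAt (w ∘ ℓ) (fderiv ℝ w r (z - r)) 0 := by
    refine HasFDerivAt.comp_hasDerivAt (0 : ℝ) ?_ AffineMap.hasDerivAt_lineMap
    simpa [ℓ] using hd.hasFDerivAt
  have := hφ.slope_le_of_hasDerivAt (left_mem_Icc.2 zero_le_one) (right_mem_Icc.2 zero_le_one)
    one_pos hd'
  simp only [slope_def_field, Function.comp_apply, AffineMap.lineMap_apply_one,
    AffineMap.lineMap_apply_zero, sub_zero, div_one, ℓ] at this
  linarith

lemma Convex.closure_subset_closure_of_ae [MeasurableSpace E] [OpensMeasurableSpace E]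
    {μ : Measure E} [μ.IsOpenPosMeasure] (hΩ : Convex ℝ Ω) (hΩi : (interior Ω).Nonempty)
    {P : E → Prop} (hP : ∀ᵐ p ∂μ.restrict Ω, P p) :
    closure Ω ⊆ closure {p ∈ Ω | P p} := by
  intro p hp
  rw [← hΩ.closure_interior_eq_closure_of_nonempty_interior hΩi, _root_.mem_closure_iff] at hp
  refine _root_.mem_closure_iff.2 fun o ho hpo => ?_
  have hoΩ : IsOpen (o ∩ interior Ω) := ho.inter isOpen_interior
  have : (ae (μ.restrict (o ∩ interior Ω))).NeBot :=
    ae_restrict_neBot.2 (hoΩ.measure_ne_zero μ (hp o ho hpo))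
  obtain ⟨q, hq, hPq⟩ := ((ae_restrict_mem hoΩ.measurableSet).and
    (ae_restrict_of_ae_restrict_of_subset (inter_subset_right.trans interior_subset) hP)).exists
  exact ⟨q, hq.1, interior_subset hq.2, hPq⟩

theorem ConcaveOn.lipschitzOnWith_closure [MeasurableSpace E] [OpensMeasurableSpace E]
    {μ : Measure E} [μ.IsOpenPosMeasure] {C : ℝ≥0} (hw : ConcaveOn ℝ Ω w)
    (hΩi : (interior Ω).Nonempty) (hwc : ContinuousOn w (closure Ω))
    (hwd : ∀ᵐ p ∂μ.restrict Ω, DifferentiableAt ℝ w p)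
    (hC : ∀ p ∈ Ω, DifferentiableAt ℝ w p → ‖fderiv ℝ w p‖ ≤ C) :
    LipschitzOnWith C w (closure Ω) := by
  set S := {p ∈ Ω | DifferentiableAt ℝ w p}
  have hS : closure Ω ⊆ closure S := hw.1.closure_subset_closure_of_ae hΩi hwd
  have hSΩ : S ⊆ closure Ω := fun p hp => subset_closure hp.1
  have hdist : ∀ z : E, Continuous fun p => dist z p := fun z => continuous_const.dist continuous_id
  have hΩ : ∀ p ∈ closure Ω, ∀ z ∈ Ω, w z ≤ w p + C * dist z p := by
    intro p hp z hz
    refine ContinuousWithinAt.closure_le (hS hp) continuousWithinAt_const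
      (((hwc p hp).mono hSΩ).add ((hdist z).continuousWithinAt.const_mul _)) ?_
    rintro r ⟨hr, hrd⟩
    have hbound : fderiv ℝ w r (z - r) ≤ C * dist z r := by
      rw [dist_eq_norm]
      exact (le_abs_self _).trans ((fderiv ℝ w r).le_of_opNorm_le (hC r hr hrd) _)
    simp only [Pi.add_apply]
    linarith [hw.le_add_fderiv hr hz hrd]
  refine LipschitzOnWith.of_le_add_mul C fun z hz p hp => ?_
  exact ContinuousWithinAt.closure_le hz ((hwc z hz).mono subset_closure)
    (continuousWithinAt_const.add (((hdist p).continuousWithinAt.const_mul _).congr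
      (fun _ _ => by rw [dist_comm]) (by rw [dist_comm])))
    fun z' hz' => hΩ p hp z' hz'

end Lipschitz

section Slice

variable {𝕜 E F β : Type*} [Semiring 𝕜] [PartialOrder 𝕜] [AddCommMonoid E] [AddCommMonoid F]
  [Module 𝕜 E] [Module 𝕜 F] {s : Set (E × F)}

lemma Convex.preimage_prodMk_left (hs : Convex 𝕜 s) (x : E) : Convex 𝕜 (Prod.mk x ⁻¹' s) := by
  intro y hy y' hy' a b ha hb hab
  simpa [Convex.combo_self hab] using hs hy hy' ha hb hab

lemma ConcaveOn.comp_prodMk_left [AddCommMonoid β] [PartialOrder β] [SMul 𝕜 β] {f : E × F → β}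
    (hf : ConcaveOn 𝕜 s f) (x : E) : ConcaveOn 𝕜 (Prod.mk x ⁻¹' s) fun y => f (x, y) :=
  ⟨hf.1.preimage_prodMk_left x, fun y hy y' hy' a b ha hb hab => by
    simpa [Convex.combo_self hab] using hf.2 hy hy' ha hb hab⟩

end Slice

lemma LipschitzOnWith.comp_prodMk_left {α β γ : Type*} [PseudoEMetricSpace α]
    [PseudoEMetricSpace β] [PseudoEMetricSpace γ] {K : ℝ≥0} {f : α × β → γ} {s : Set (α × β)}
    (hf : LipschitzOnWith K f s) (x : α) :
    LipschitzOnWith K (fun y => f (x, y)) (Prod.mk x ⁻¹' s) := by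
  have := hf.comp (LipschitzWith.prodMk_left x).lipschitzOnWith (mapsTo_preimage _ _)
  rwa [mul_one] at this

lemma IsOpen.eq_Ioo_csInf_csSup {α : Type*} [ConditionallyCompleteLinearOrder α]
    [TopologicalSpace α] [OrderTopology α] [DenselyOrdered α] [NoMinOrder α] [NoMaxOrder α]
    {s : Set α} (ho : IsOpen s) (hc : IsConnected s) (hb : BddBelow s) (ha : BddAbove s) :
    s = Ioo (sInf s) (sSup s) :=
  ((ho.subset_interior_iff.2 (subset_Icc_csInf_csSup hb ha)).trans interior_Icc.subset).antisymm
    (hc.Ioo_csInf_csSup_subset hb ha)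

lemma Convex.exists_vertical_chord {Ω : Set (ℝ × ℝ)} (hconv : Convex ℝ Ω)
    (hbdd : Bornology.IsBounded Ω) {x : ℝ} (hx : (Prod.mk x ⁻¹' interior Ω).Nonempty) :
    ∃ A B, A < B ∧ Prod.mk x ⁻¹' interior Ω = Ioo A B ∧ Icc A B ⊆ Prod.mk x ⁻¹' closure Ω ∧
      (x, A) ∈ frontier Ω ∧ (x, B) ∈ frontier Ω := by
  set S := Prod.mk x ⁻¹' interior Ω
  have hSbdd : Bornology.IsBounded S :=
    (LipschitzWith.prod_snd.isBounded_image hbdd).subset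
      fun y hy => ⟨(x, y), interior_subset hy, rfl⟩
  have hSI : S = Ioo (sInf S) (sSup S) :=
    (isOpen_interior.preimage (Continuous.prodMk_right x)).eq_Ioo_csInf_csSup
      ⟨hx, (hconv.interior.preimage_prodMk_left x).isPreconnected⟩ hSbdd.bddBelow hSbdd.bddAbove
  have hAB : sInf S < sSup S := by
    obtain ⟨y, hy⟩ := hx
    rw [hSI] at hy
    exact hy.1.trans hy.2
  have hcl : Icc (sInf S) (sSup S) ⊆ Prod.mk x ⁻¹' closure Ω := by
    rw [← closure_Ioo hAB.ne, ← hSI]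
    exact closure_minimal (preimage_mono interior_subset_closure)
      (isClosed_closure.preimage (Continuous.prodMk_right x))
  have hfr : ∀ y ∈ Icc (sInf S) (sSup S), y ∉ Ioo (sInf S) (sSup S) → (x, y) ∈ frontier Ω :=
    fun y hy hyS => ⟨hcl hy, fun h => hyS (hSI ▸ h)⟩
  exact ⟨_, _, hAB, hSI, hcl, hfr _ (left_mem_Icc.2 hAB.le) fun h => lt_irrefl _ h.1,
    hfr _ (right_mem_Icc.2 hAB.le) fun h => lt_irrefl _ h.2⟩

lemma DifferentiableAt.hasDerivAt_uY {w : ℝ × ℝ → ℝ} {x y : ℝ}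
    (hw : DifferentiableAt ℝ w (x, y)) : HasDerivAt (fun t => w (x, t)) (uY w (x, y)) y :=
  hw.hasFDerivAt.comp_hasDerivAt y ((hasDerivAt_const y x).prodMk (hasDerivAt_id y))

lemma integral_slice_uY_mul_sub_nonneg {Ω : Set (ℝ × ℝ)} (hconv : Convex ℝ Ω)
    (hbdd : Bornology.IsBounded Ω) {u v : ℝ × ℝ → ℝ} {Ku Kv : ℝ≥0}
    (hulip : LipschitzOnWith Ku u (closure Ω)) (hvlip : LipschitzOnWith Kv v (closure Ω))
    (hv : ConcaveOn ℝ Ω v) (hu0 : ∀ p ∈ frontier Ω, u p = 0) (hv0 : ∀ p ∈ frontier Ω, v p = 0)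
    (hvu : ∀ p ∈ Ω, v p ≤ u p) (x : ℝ)
    (hdiff : ∀ᵐ y, (x, y) ∈ interior Ω →
      DifferentiableAt ℝ u (x, y) ∧ DifferentiableAt ℝ v (x, y)) :
    0 ≤ ∫ y in Prod.mk x ⁻¹' interior Ω, uY v (x, y) * (uY u (x, y) - uY v (x, y)) := by
  rcases (Prod.mk x ⁻¹' interior Ω).eq_empty_or_nonempty with hx | hx
  · simp [hx]
  obtain ⟨A, B, hAB, hSI, hcl, hA, hB⟩ := hconv.exists_vertical_chord hbdd hx
  have hmem : Ioo A B ⊆ Prod.mk x ⁻¹' Ω := hSI ▸ preimage_mono interior_subset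
  have hGlip := (hvlip.comp_prodMk_left x).mono hcl
  have key := integral_deriv_mul_deriv_nonneg_of_concaveOn hAB
    ((hv.comp_prodMk_left x).subset hmem (convex_Ioo A B)) hGlip
    (((hulip.comp_prodMk_left x).mono hcl).sub hGlip)
    (fun y hy => sub_nonneg.2 (hvu _ (hmem hy))) (by simp [hu0 _ hA, hv0 _ hA])
    (by simp [hu0 _ hB, hv0 _ hB])
  rw [intervalIntegral.integral_of_le hAB.le, integral_Ioc_eq_integral_Ioo] at key
  rw [hSI]
  refine key.trans_eq (setIntegral_congr_ae measurableSet_Ioo ?_)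
  filter_upwards [hdiff] with y hy hyI
  obtain ⟨hud, hvd⟩ := hy (show y ∈ Prod.mk x ⁻¹' interior Ω from hSI ▸ hyI)
  rw [hvd.hasDerivAt_uY.deriv, (hud.hasDerivAt_uY.fun_sub hvd.hasDerivAt_uY).deriv]

lemma abs_uY_le_norm_fderiv (w : ℝ × ℝ → ℝ) (p : ℝ × ℝ) : |uY w p| ≤ ‖fderiv ℝ w p‖ := by
  simpa [uY] using (fderiv ℝ w p).le_opNorm (0, 1)

lemma MemU.lipschitzOnWith {Ω : Set (ℝ × ℝ)} {w : ℝ × ℝ → ℝ} (hw : MemU Ω w)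
    (hΩi : (interior Ω).Nonempty) : ∃ K : ℝ≥0, LipschitzOnWith K w (closure Ω) := by
  obtain ⟨C, hC⟩ := hw.2.2.2.1
  exact ⟨C.toNNReal, hw.2.1.lipschitzOnWith_closure hΩi hw.1 hw.2.2.1
    fun p hp hd => (hC p hp hd).trans (Real.le_coe_toNNReal C)⟩

lemma MemU.integrableOn_uY_mul {Ω : Set (ℝ × ℝ)} (hbdd : Bornology.IsBounded Ω)
    {w w' : ℝ × ℝ → ℝ} (hw : MemU Ω w) (hw' : MemU Ω w') :
    IntegrableOn (fun p => uY w p * uY w' p) (interior Ω) := by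
  obtain ⟨C, hC⟩ := hw.2.2.2.1
  obtain ⟨C', hC'⟩ := hw'.2.2.2.1
  have hmeas : ∀ w, Measurable (uY w) := fun w => measurable_fderiv_apply_const ℝ w (0, 1)
  refine Measure.integrableOn_of_bounded (M := C * C')
    (hbdd.subset interior_subset).measure_lt_top.ne
    ((hmeas w).mul (hmeas w')).aestronglyMeasurable ?_
  filter_upwards [ae_restrict_of_ae_restrict_of_subset interior_subset (hw.2.2.1.and hw'.2.2.1),
    ae_restrict_mem isOpen_interior.measurableSet] with p ⟨hd, hd'⟩ hp
  have hb := hC p (interior_subset hp) hd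
  have hb' := hC' p (interior_subset hp) hd'
  rw [norm_mul, Real.norm_eq_abs, Real.norm_eq_abs]
  exact mul_le_mul ((abs_uY_le_norm_fderiv w p).trans hb) ((abs_uY_le_norm_fderiv w' p).trans hb')
    (abs_nonneg _) ((norm_nonneg _).trans hb)

lemma MemU.integrableOn_uY_mul_sub {Ω : Set (ℝ × ℝ)} (hbdd : Bornology.IsBounded Ω)
    {u v : ℝ × ℝ → ℝ} (hu : MemU Ω u) (hv : MemU Ω v) :
    IntegrableOn (fun p => uY v p * (uY u p - uY v p)) (interior Ω) :=
  ((hv.integrableOn_uY_mul hbdd hu).sub (hv.integrableOn_uY_mul hbdd hv)).congr_fun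
    (fun _ _ => (mul_sub _ _ _).symm) isOpen_interior.measurableSet

lemma integral_uY_mul_sub_nonneg {Ω : Set (ℝ × ℝ)} (hconv : Convex ℝ Ω)
    (hbdd : Bornology.IsBounded Ω) (hint : (interior Ω).Nonempty) {u v : ℝ × ℝ → ℝ}
    (hu : MemU Ω u) (hv : MemU Ω v) (hvu : ∀ p ∈ Ω, v p ≤ u p) :
    0 ≤ ∫ p in interior Ω, uY v p * (uY u p - uY v p) := by
  obtain ⟨Ku, hulip⟩ := hu.lipschitzOnWith hint
  obtain ⟨Kv, hvlip⟩ := hv.lipschitzOnWith hint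
  have hU : MeasurableSet (interior Ω) := isOpen_interior.measurableSet
  have hf := hu.integrableOn_uY_mul_sub hbdd hv
  have hdiff : ∀ᵐ p ∂(volume.prod volume), p ∈ interior Ω →
      DifferentiableAt ℝ u p ∧ DifferentiableAt ℝ v p := by
    rw [← Measure.volume_eq_prod, ← ae_restrict_iff' hU]
    exact ae_restrict_of_ae_restrict_of_subset interior_subset (hu.2.2.1.and hv.2.2.1)
  rw [← integral_indicator hU, Measure.volume_eq_prod]
  rw [← integrable_indicator_iff hU, Measure.volume_eq_prod] at hf
  rw [integral_prod _ hf]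
  refine integral_nonneg_of_ae ?_
  filter_upwards [Measure.ae_ae_of_ae_prod hdiff] with x hx
  have hslice :=
    integral_slice_uY_mul_sub_nonneg hconv hbdd hulip hvlip hv.2.1 hu.2.2.2.2 hv.2.2.2.2 hvu x hx
  exact hslice.trans_eq (integral_indicator (hU.preimage measurable_prodMk_left)).symm

theorem stmt15_general (Ω : Set (ℝ × ℝ)) (hconv : Convex ℝ Ω) (hbdd : Bornology.IsBounded Ω)
    (hint : (interior Ω).Nonempty)
    (u : ℝ × ℝ → ℝ) (hu : MemU Ω u) (ξ₀ : ℝ × ℝ)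
    (hu1 : u ξ₀ = 1)
    (v : ℝ × ℝ → ℝ) (hv : MemU Ω v)
    (hmin : ∀ w : ℝ × ℝ → ℝ, MemU Ω w → w ξ₀ = 1 → ∀ p ∈ Ω, v p ≤ w p) :
    (∫ p in Ω, (uY v p) ^ 2) ≤ ∫ p in Ω, (uY u p) ^ 2 := by
  have hΩ : interior Ω =ᵐ[volume] Ω := interior_ae_eq_of_null_frontier (hconv.addHaar_frontier _)
  rw [← setIntegral_congr_set hΩ, ← setIntegral_congr_set hΩ]
  have hkey := integral_uY_mul_sub_nonneg hconv hbdd hint hu hv (hmin u hu hu1)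
  have hvv : IntegrableOn (fun p => uY v p ^ 2) (interior Ω) := by
    simpa only [sq] using hv.integrableOn_uY_mul hbdd hv
  have huu : IntegrableOn (fun p => uY u p ^ 2) (interior Ω) := by
    simpa only [sq] using hu.integrableOn_uY_mul hbdd hu
  have hcross := hu.integrableOn_uY_mul_sub hbdd hv
  calc ∫ p in interior Ω, uY v p ^ 2
      ≤ (∫ p in interior Ω, uY v p ^ 2) + 2 * ∫ p in interior Ω, uY v p * (uY u p - uY v p) := by
        linarith
    _ = ∫ p in interior Ω, (uY v p ^ 2 + 2 * (uY v p * (uY u p - uY v p))) := by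
        rw [integral_add hvv (hcross.const_mul 2), integral_const_mul]
    _ ≤ ∫ p in interior Ω, uY u p ^ 2 :=
        integral_mono (hvv.add (hcross.const_mul 2)) huu
          fun p => by nlinarith [sq_nonneg (uY u p - uY v p)]

/-- If `u ∈ U_Ω` attains its maximum value `1` at `ξ₀` and `ũ` is the smallest function
in `U_Ω` with `ũ(ξ₀) = 1`, then `∫_Ω u_y² ≥ ∫_Ω ũ_y²`. -/
theorem stmt15 (Ω : Set (ℝ × ℝ)) (hconv : Convex ℝ Ω) (hbdd : Bornology.IsBounded Ω)
    (hint : (interior Ω).Nonempty)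
    (u : ℝ × ℝ → ℝ) (hu : MemU Ω u) (ξ₀ : ℝ × ℝ) (hξ₀ : ξ₀ ∈ Ω)
    (hu1 : u ξ₀ = 1) (hule : ∀ p ∈ Ω, u p ≤ 1)
    (v : ℝ × ℝ → ℝ) (hv : MemU Ω v) (hv1 : v ξ₀ = 1)
    (hmin : ∀ w : ℝ × ℝ → ℝ, MemU Ω w → w ξ₀ = 1 → ∀ p ∈ Ω, v p ≤ w p) :
    (∫ p in Ω, (uY v p) ^ 2) ≤ ∫ p in Ω, (uY u p) ^ 2 :=
  stmt15_general Ω hconv hbdd hint u hu ξ₀ hu1 v hv hmin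
end

section
/- Let Ω̃ ⊂ ℝ² be a convex bounded set with nonempty interior, let c ∈ ℝ, and let Ω be the image of Ω̃ under the shear map T(x̃, ỹ) = (x̃, ỹ + (c/2)·x̃). Suppose there exists a constant M̃ ≥ 0 such that every ũ ∈ U_{Ω̃} satisfies ∫_{Ω̃} ũ_{x̃}² dx̃ dỹ ≤ M̃ · ∫_{Ω̃} ũ_{ỹ}² dx̃ dỹ. Then every u ∈ U_Ω satisfies ∫_Ω u_x² dx dy ≤ (2M̃ + c²/2) · ∫_Ω u_y² dx dy. -/
open MeasureTheory Real Set Filter Asymptotics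

/-! ### Auxiliary material for `stmt17` -/

noncomputable def shearEquiv (c : ℝ) : (ℝ × ℝ) ≃L[ℝ] (ℝ × ℝ) :=
  LinearEquiv.toContinuousLinearEquiv
  { toFun := fun q => (q.1, q.2 + c * q.1)
    invFun := fun q => (q.1, q.2 - c * q.1)
    map_add' := fun a b => by simp [Prod.ext_iff]; ring
    map_smul' := fun t a => by simp [Prod.ext_iff]; ring
    left_inv := fun q => by simp
    right_inv := fun q => by simp }

lemma shearEquiv_apply (c : ℝ) (q : ℝ × ℝ) : shearEquiv c q = (q.1, q.2 + c * q.1) := rfl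

lemma shear_mp (c : ℝ) :
    MeasurePreserving (fun q : ℝ × ℝ => (q.1, q.2 + c * q.1)) volume volume := by
  rw [show (volume : Measure (ℝ × ℝ)) = (volume : Measure ℝ).prod volume from rfl]
  exact (MeasurePreserving.id volume).skew_product (g := fun x y => y + c * x)
    (measurable_snd.add (measurable_fst.const_mul c))
    (Filter.Eventually.of_forall fun x => map_add_right_eq_self volume (c * x))

lemma fderiv_comp_shear (c : ℝ) (u : ℝ × ℝ → ℝ) (p : ℝ × ℝ) :
    fderiv ℝ (fun q => u (shearEquiv c q)) p =
      (fderiv ℝ u (shearEquiv c p)).comp (shearEquiv c : (ℝ × ℝ) →L[ℝ] (ℝ × ℝ)) :=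
  (shearEquiv c).comp_right_fderiv (f := u)

lemma uX_comp_shear (c : ℝ) (u : ℝ × ℝ → ℝ) (p : ℝ × ℝ) :
    uX (fun q => u (shearEquiv c q)) p =
      uX u (shearEquiv c p) + c * uY u (shearEquiv c p) := by
  have h1 : ((1 : ℝ), c) = ((1 : ℝ), (0 : ℝ)) + c • ((0 : ℝ), (1 : ℝ)) := by
    simp [Prod.ext_iff]
  simp only [uX, uY, fderiv_comp_shear c u p, ContinuousLinearMap.comp_apply]
  rw [show (shearEquiv c : (ℝ × ℝ) →L[ℝ] (ℝ × ℝ)) ((1 : ℝ), (0 : ℝ)) = ((1 : ℝ), c) by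
    simp [shearEquiv_apply], h1, map_add, _root_.map_smul]
  simp

lemma uY_comp_shear (c : ℝ) (u : ℝ × ℝ → ℝ) (p : ℝ × ℝ) :
    uY (fun q => u (shearEquiv c q)) p = uY u (shearEquiv c p) := by
  simp only [uY, fderiv_comp_shear c u p, ContinuousLinearMap.comp_apply]
  congr 1
  simp [shearEquiv_apply]

lemma integrable_of_bound17 {Ω : Set (ℝ × ℝ)} (hfin : volume Ω < ⊤)
    (hns : NullMeasurableSet Ω volume) {f : ℝ × ℝ → ℝ} (hf : Measurable f) {K : ℝ}
    (hK : ∀ p ∈ Ω, |f p| ≤ K) : IntegrableOn f Ω := by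
  haveI : IsFiniteMeasure (volume.restrict Ω) :=
    ⟨by rwa [Measure.restrict_apply_univ]⟩
  refine Integrable.mono' (integrable_const K) hf.aestronglyMeasurable ?_
  exact (ae_restrict_mem₀ hns).mono fun p hp => by
    simpa [Real.norm_eq_abs] using hK p hp

/-- If `Ω` is the image of `Ω̃` under the shear `(x̃, ỹ) ↦ (x̃, ỹ + (c/2)x̃)` and every
`ũ ∈ U_{Ω̃}` satisfies `∫ ũ_x² ≤ M̃ ∫ ũ_y²`, then every `u ∈ U_Ω` satisfies
`∫ u_x² ≤ (2M̃ + c²/2) ∫ u_y²`. -/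
theorem stmt17 (Ωt : Set (ℝ × ℝ)) (hconv : Convex ℝ Ωt) (hbdd : Bornology.IsBounded Ωt)
    (hint : (interior Ωt).Nonempty) (c : ℝ) (Ω : Set (ℝ × ℝ))
    (hΩ : Ω = (fun q : ℝ × ℝ => (q.1, q.2 + (c / 2) * q.1)) '' Ωt)
    (M : ℝ) (hM : 0 ≤ M)
    (hbound : ∀ v : ℝ × ℝ → ℝ, MemU Ωt v → Ix Ωt v ≤ M * Iy Ωt v) :
    ∀ u : ℝ × ℝ → ℝ, MemU Ω u → Ix Ω u ≤ (2 * M + c ^ 2 / 2) * Iy Ω u := by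
  intro u hu
  set e := shearEquiv (c / 2) with he
  have hTfun : (fun q : ℝ × ℝ => (q.1, q.2 + (c / 2) * q.1)) = ⇑e := rfl
  rw [hTfun] at hΩ
  obtain ⟨hcont, hconc, hdiff, ⟨C, hC⟩, hbdry⟩ := hu
  have emb : MeasurableEmbedding (⇑e) := e.toHomeomorph.measurableEmbedding
  have mp : MeasurePreserving (⇑e) (volume.restrict Ωt) (volume.restrict Ω) := by
    rw [hΩ]
    exact (shear_mp (c / 2)).restrict_image_emb emb Ωt
  have hmemΩ : ∀ p ∈ Ωt, e p ∈ Ω := fun p hp => hΩ ▸ Set.mem_image_of_mem _ hp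
  set v : ℝ × ℝ → ℝ := fun p => u (e p) with hv
  -- v belongs to U_{Ω̃}
  have hmemv : MemU Ωt v := by
    refine ⟨?_, ?_, ?_, ?_, ?_⟩
    · have hclo : Set.MapsTo (⇑e) (closure Ωt) (closure Ω) := by
        intro p hp
        have hcl := e.toHomeomorph.image_closure Ωt
        rw [ContinuousLinearEquiv.coe_toHomeomorph] at hcl
        rw [hΩ, ← hcl]
        exact Set.mem_image_of_mem _ hp
      exact hcont.comp e.continuous.continuousOn hclo
    · refine ⟨hconv, fun x hx y hy a b ha hb hab => ?_⟩
      have h2 := hconc.2 (hmemΩ x hx) (hmemΩ y hy) ha hb hab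
      have h3 : e (a • x + b • y) = a • e x + b • e y := by
        simp [map_add, _root_.map_smul]
      simpa [hv, h3] using h2
    · have h1 := hdiff
      rw [← mp.map_eq] at h1
      have h2 : ∀ᵐ p ∂volume.restrict Ωt, DifferentiableAt ℝ u (e p) :=
        emb.ae_map_iff.mp h1
      exact h2.mono fun p hp => e.comp_right_differentiableAt_iff.mpr hp
    · refine ⟨max C 0 * ‖(e : (ℝ × ℝ) →L[ℝ] (ℝ × ℝ))‖, fun p hp hdp => ?_⟩
      have hup : DifferentiableAt ℝ u (e p) := e.comp_right_differentiableAt_iff.mp hdp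
      have hle := hC (e p) (hmemΩ p hp) hup
      rw [show fderiv ℝ v p = (fderiv ℝ u (e p)).comp (e : (ℝ × ℝ) →L[ℝ] (ℝ × ℝ)) from
        fderiv_comp_shear (c / 2) u p]
      calc ‖(fderiv ℝ u (e p)).comp (e : (ℝ × ℝ) →L[ℝ] (ℝ × ℝ))‖
          ≤ ‖fderiv ℝ u (e p)‖ * ‖(e : (ℝ × ℝ) →L[ℝ] (ℝ × ℝ))‖ :=
            ContinuousLinearMap.opNorm_comp_le _ _
        _ ≤ max C 0 * ‖(e : (ℝ × ℝ) →L[ℝ] (ℝ × ℝ))‖ := by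
            gcongr
            exact hle.trans (le_max_left _ _)
    · intro p hp
      apply hbdry
      have h1 := e.toHomeomorph.image_frontier Ωt
      rw [ContinuousLinearEquiv.coe_toHomeomorph] at h1
      rw [hΩ, ← h1]
      exact Set.mem_image_of_mem _ hp
  -- basic facts about Ω
  have hΩconv : Convex ℝ Ω := hΩ ▸ hconv.linear_image (e : (ℝ × ℝ) →ₗ[ℝ] (ℝ × ℝ))
  have hΩbdd : Bornology.IsBounded Ω := by
    rw [hΩ]
    exact (e : (ℝ × ℝ) →L[ℝ] (ℝ × ℝ)).lipschitz.isBounded_image hbdd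
  have hfin : volume Ω < ⊤ := hΩbdd.measure_lt_top
  have hns : NullMeasurableSet Ω volume := hΩconv.nullMeasurableSet volume
  -- pointwise bounds
  set D := max C 0 with hD
  have hD0 : 0 ≤ D := le_max_right _ _
  have hbX : ∀ p ∈ Ω, |uX u p| ≤ D := by
    intro p hp
    by_cases hdp : DifferentiableAt ℝ u p
    · calc |uX u p| = ‖fderiv ℝ u p ((1 : ℝ), (0 : ℝ))‖ := rfl
        _ ≤ ‖fderiv ℝ u p‖ * ‖((1 : ℝ), (0 : ℝ))‖ := ContinuousLinearMap.le_opNorm _ _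
        _ ≤ D * 1 := by
            refine mul_le_mul ((hC p hp hdp).trans (le_max_left _ _)) ?_ (norm_nonneg _)
              hD0
            rw [Prod.norm_def]; simp
        _ = D := mul_one D
    · simp [uX, fderiv_zero_of_not_differentiableAt hdp, hD0]
  have hbY : ∀ p ∈ Ω, |uY u p| ≤ D := by
    intro p hp
    by_cases hdp : DifferentiableAt ℝ u p
    · calc |uY u p| = ‖fderiv ℝ u p ((0 : ℝ), (1 : ℝ))‖ := rfl
        _ ≤ ‖fderiv ℝ u p‖ * ‖((0 : ℝ), (1 : ℝ))‖ := ContinuousLinearMap.le_opNorm _ _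
        _ ≤ D * 1 := by
            refine mul_le_mul ((hC p hp hdp).trans (le_max_left _ _)) ?_ (norm_nonneg _)
              hD0
            rw [Prod.norm_def]; simp
        _ = D := mul_one D
    · simp [uY, fderiv_zero_of_not_differentiableAt hdp, hD0]
  -- measurability
  have hmX : Measurable (uX u) := measurable_fderiv_apply_const ℝ u ((1 : ℝ), (0 : ℝ))
  have hmY : Measurable (uY u) := measurable_fderiv_apply_const ℝ u ((0 : ℝ), (1 : ℝ))
  set g : ℝ × ℝ → ℝ := fun q => uX u q + (c / 2) * uY u q with hg
  have hmg : Measurable g := hmX.add (hmY.const_mul _)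
  have hbg : ∀ p ∈ Ω, |g p| ≤ D + |c / 2| * D := by
    intro p hp
    calc |g p| ≤ |uX u p| + |(c / 2) * uY u p| := abs_add_le _ _
      _ = |uX u p| + |c / 2| * |uY u p| := by rw [abs_mul]
      _ ≤ D + |c / 2| * D := by
          exact add_le_add (hbX p hp) (mul_le_mul_of_nonneg_left (hbY p hp) (abs_nonneg _))
  -- integrability
  have int_g2 : IntegrableOn (fun q => g q ^ 2) Ω := by
    refine integrable_of_bound17 hfin hns (hmg.pow_const 2) (K := (D + |c / 2| * D) ^ 2) ?_
    intro p hp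
    rw [abs_pow]
    exact pow_le_pow_left₀ (abs_nonneg _) (hbg p hp) 2
  have int_h2 : IntegrableOn (fun q => uY u q ^ 2) Ω := by
    refine integrable_of_bound17 hfin hns (hmY.pow_const 2) (K := D ^ 2) ?_
    intro p hp
    rw [abs_pow]
    exact pow_le_pow_left₀ (abs_nonneg _) (hbY p hp) 2
  have int_x2 : IntegrableOn (fun q => uX u q ^ 2) Ω := by
    refine integrable_of_bound17 hfin hns (hmX.pow_const 2) (K := D ^ 2) ?_
    intro p hp
    rw [abs_pow]
    exact pow_le_pow_left₀ (abs_nonneg _) (hbX p hp) 2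
  -- images of the integrals under the shear
  have hIxv : Ix Ωt v = ∫ q in Ω, g q ^ 2 := by
    have h1 : ∀ p, uX v p ^ 2 = (fun q => g q ^ 2) (e p) := fun p => by
      rw [show uX v p = g (e p) from uX_comp_shear (c / 2) u p]
    calc Ix Ωt v = ∫ p in Ωt, (fun q => g q ^ 2) (e p) := by
          simp only [Ix, h1]
      _ = ∫ q in Ω, g q ^ 2 := mp.integral_comp emb (fun q => g q ^ 2)
  have hIyv : Iy Ωt v = Iy Ω u := by
    have h1 : ∀ p, uY v p ^ 2 = (fun q => uY u q ^ 2) (e p) := fun p => by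
      rw [show uY v p = uY u (e p) from uY_comp_shear (c / 2) u p]
    calc Iy Ωt v = ∫ p in Ωt, (fun q => uY u q ^ 2) (e p) := by
          simp only [Iy, h1]
      _ = Iy Ω u := mp.integral_comp emb (fun q => uY u q ^ 2)
  have hkey : ∫ q in Ω, g q ^ 2 ≤ M * Iy Ω u := by
    rw [← hIxv, ← hIyv]
    exact hbound v hmemv
  -- pointwise inequality and conclusion
  have pt : ∀ q, uX u q ^ 2 ≤ 2 * g q ^ 2 + c ^ 2 / 2 * uY u q ^ 2 := by
    intro q
    have h1 : uX u q = g q - (c / 2) * uY u q := by rw [hg]; ring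
    rw [h1]
    nlinarith [sq_nonneg (g q + (c / 2) * uY u q)]
  have hmain : Ix Ω u ≤ ∫ q in Ω, (2 * g q ^ 2 + c ^ 2 / 2 * uY u q ^ 2) := by
    refine integral_mono int_x2 ?_ pt
    exact (int_g2.const_mul 2).add (int_h2.const_mul _)
  rw [integral_add (int_g2.const_mul 2) (int_h2.const_mul _), integral_const_mul,
    integral_const_mul] at hmain
  have hfinal : 2 * ∫ q in Ω, g q ^ 2 ≤ 2 * (M * Iy Ω u) := by linarith
  calc Ix Ω u ≤ 2 * (∫ q in Ω, g q ^ 2) + c ^ 2 / 2 * ∫ q in Ω, uY u q ^ 2 := hmain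
    _ ≤ 2 * (M * Iy Ω u) + c ^ 2 / 2 * Iy Ω u := by
        exact add_le_add hfinal (le_of_eq rfl)
    _ = (2 * M + c ^ 2 / 2) * Iy Ω u := by ring
end

section
/- Let Ω ⊂ ℝ² be a convex bounded set with nonempty interior whose left vertical support line is not angular, let ξ be a regular point of ∂Ω at which the outward unit normal is (cos θ, sin θ) with |θ| < φ for some fixed φ ∈ (0, π/2), and for ε > 0 let λ(ε) denote the length of the chord of Ω cut by the line parallel to the support line at ξ, lying on the Ω-side at distance ε from it. Then λ(ε)/ε → ∞ as ε → 0⁺. -/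
open MeasureTheory Real Set Filter Asymptotics

lemma chordStep1 (Ω : Set (ℝ × ℝ)) (C S : ℝ) (hCS : C^2 + S^2 = 1) (ξ : ℝ × ℝ)
    (hreg : IsRegularPoint Ω ξ) (hsup : IsSupportDir Ω ξ (C, S))
    (η : ℝ) (hη : 0 < η) (σ : ℝ) (hσ : σ = 1 ∨ σ = -1) :
    ∃ a ∈ Ω, 0 < σ * ((-S*a.1 + C*a.2) - (-S*ξ.1 + C*ξ.2)) ∧
      C*ξ.1 + S*ξ.2 - η * (σ * ((-S*a.1 + C*a.2) - (-S*ξ.1 + C*ξ.2))) ≤ C*a.1 + S*a.2 := by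
  by_contra h
  push_neg at h
  have hσ2 : σ * σ = 1 := by rcases hσ with h | h <;> simp [h]
  set m : ℝ × ℝ := (C - η*σ*S, S + η*σ*C) with hm
  have hm0 : m ≠ 0 := by
    intro he
    rw [Prod.ext_iff] at he
    obtain ⟨h1, h2⟩ := he
    simp only [hm, Prod.fst_zero, Prod.snd_zero] at h1 h2
    have h10 : (1:ℝ) = 0 := by linear_combination C*h1 + S*h2 - hCS
    exact one_ne_zero h10
  have hmsup : IsSupportDir Ω ξ m := by
    refine ⟨hm0, fun q hq => ?_⟩
    by_cases hpos : 0 < σ * ((-S*q.1 + C*q.2) - (-S*ξ.1 + C*ξ.2))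
    · have := h q hq hpos
      simp only [hm]
      nlinarith [this, hη, hσ2]
    · push_neg at hpos
      have hg := hsup.2 q hq
      simp only [hm]
      nlinarith [hg, hη, hpos, mul_nonneg hη.le (neg_nonneg.2 hpos)]
  obtain ⟨r, hr⟩ := hreg.2 (C, S) m hsup hmsup
  rw [Prod.ext_iff] at hr
  simp only [hm, Prod.smul_fst, Prod.smul_snd, smul_eq_mul] at hr
  obtain ⟨h1, h2⟩ := hr
  have hz : η * σ = 0 := by linear_combination (-S) * h1 + C * h2 - (η*σ) * hCS
  rcases hσ with h | h <;> rw [h] at hz <;> simp at hz <;> linarith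

set_option maxHeartbeats 1000000 in
lemma chordStepK (Ω : Set (ℝ × ℝ)) (hconv : Convex ℝ Ω) (C S : ℝ) (hCS : C^2 + S^2 = 1)
    (ξ : ℝ × ℝ) (hreg : IsRegularPoint Ω ξ) (hsup : IsSupportDir Ω ξ (C, S))
    (η : ℝ) (hη : 0 < η) (σ : ℝ) (hσ : σ = 1 ∨ σ = -1) :
    ∃ s₀ > 0, ∀ s, 0 < s → s ≤ s₀ → ∃ a ∈ Ω,
      s ≤ σ * ((-S*a.1 + C*a.2) - (-S*ξ.1 + C*ξ.2)) ∧
      C*ξ.1 + S*ξ.2 - η * s ≤ C*a.1 + S*a.2 := by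
  have hη4 : 0 < η/4 := by linarith
  obtain ⟨a₁, ha₁Ω, hs₁pos, hga₁⟩ := chordStep1 Ω C S hCS ξ hreg hsup (η/4) hη4 σ hσ
  set s₁ := σ * ((-S*a₁.1 + C*a₁.2) - (-S*ξ.1 + C*ξ.2)) with hs₁def
  refine ⟨s₁, hs₁pos, fun s hs hss₁ => ?_⟩
  have hS2 : S^2 ≤ 1 := by nlinarith [sq_nonneg C]
  have hC2 : C^2 ≤ 1 := by nlinarith [sq_nonneg S]
  have hS1 : |S| ≤ 1 := by
    rw [← Real.sqrt_one]
    rw [← Real.sqrt_sq_eq_abs]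
    exact Real.sqrt_le_sqrt hS2
  have hC1 : |C| ≤ 1 := by
    rw [← Real.sqrt_one, ← Real.sqrt_sq_eq_abs]
    exact Real.sqrt_le_sqrt hC2
  have hσabs : |σ| = 1 := by rcases hσ with h | h <;> rw [h] <;> simp
  rcases le_or_gt s₁ (2*s) with hcase | hcase
  · exact ⟨a₁, ha₁Ω, hss₁, by nlinarith⟩
  · have hξcl : ξ ∈ closure Ω := by
      have h := hreg.1
      rw [frontier, Set.mem_diff] at h
      exact h.1
    set ρ := min (s/2) (η*s/4) with hρdef
    have hρpos : 0 < ρ := by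
      apply lt_min <;> nlinarith
    obtain ⟨b, hbΩ, hbd⟩ := Metric.mem_closure_iff.1 hξcl ρ hρpos
    have hb1 : |b.1 - ξ.1| ≤ ρ := by
      have h' : dist ξ.1 b.1 ≤ dist ξ b := by rw [Prod.dist_eq]; exact le_max_left _ _
      rw [Real.dist_eq] at h'
      rw [abs_sub_comm]; linarith
    have hb2 : |b.2 - ξ.2| ≤ ρ := by
      have h' : dist ξ.2 b.2 ≤ dist ξ b := by rw [Prod.dist_eq]; exact le_max_right _ _
      rw [Real.dist_eq] at h'
      rw [abs_sub_comm]; linarith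
    have habs1 : |S * (b.1 - ξ.1)| ≤ ρ := by
      rw [abs_mul]
      calc |S| * |b.1 - ξ.1| ≤ 1 * ρ := mul_le_mul hS1 hb1 (abs_nonneg _) zero_le_one
      _ = ρ := one_mul ρ
    have habs2 : |C * (b.2 - ξ.2)| ≤ ρ := by
      rw [abs_mul]
      calc |C| * |b.2 - ξ.2| ≤ 1 * ρ := mul_le_mul hC1 hb2 (abs_nonneg _) zero_le_one
      _ = ρ := one_mul ρ
    have habs3 : |C * (b.1 - ξ.1)| ≤ ρ := by
      rw [abs_mul]
      calc |C| * |b.1 - ξ.1| ≤ 1 * ρ := mul_le_mul hC1 hb1 (abs_nonneg _) zero_le_one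
      _ = ρ := one_mul ρ
    have habs4 : |S * (b.2 - ξ.2)| ≤ ρ := by
      rw [abs_mul]
      calc |S| * |b.2 - ξ.2| ≤ 1 * ρ := mul_le_mul hS1 hb2 (abs_nonneg _) zero_le_one
      _ = ρ := one_mul ρ
    have hT : |(-S*b.1 + C*b.2) - (-S*ξ.1 + C*ξ.2)| ≤ 2*ρ := by
      have he : (-S*b.1 + C*b.2) - (-S*ξ.1 + C*ξ.2) = -(S*(b.1-ξ.1)) + C*(b.2-ξ.2) := by ring
      rw [he]
      refine le_trans (abs_add_le _ _) ?_
      rw [abs_neg]; linarith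
    have hG : |(C*b.1 + S*b.2) - (C*ξ.1 + S*ξ.2)| ≤ 2*ρ := by
      have he : (C*b.1 + S*b.2) - (C*ξ.1 + S*ξ.2) = C*(b.1-ξ.1) + S*(b.2-ξ.2) := by ring
      rw [he]
      exact le_trans (abs_add_le _ _) (by linarith)
    have hw : |σ * ((-S*b.1 + C*b.2) - (-S*ξ.1 + C*ξ.2))| ≤ 2*ρ := by
      rw [abs_mul, hσabs, one_mul]; exact hT
    set w := σ * ((-S*b.1 + C*b.2) - (-S*ξ.1 + C*ξ.2)) with hwdef
    have hwlb : -(2*ρ) ≤ w := (abs_le.1 hw).1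
    have hGlb : C*ξ.1 + S*ξ.2 - 2*ρ ≤ C*b.1 + S*b.2 := by
      have h := (abs_le.1 hG).1; linarith
    set lam := 2*s/s₁ with hlamdef
    have hlam_pos : 0 < lam := by rw [hlamdef]; positivity
    have hlam_lt : lam < 1 := by
      rw [hlamdef, div_lt_one hs₁pos]; linarith
    have hlam_s₁ : lam * s₁ = 2*s := by
      rw [hlamdef]; field_simp
    clear_value lam
    set a : ℝ × ℝ := ((1-lam)*b.1 + lam*a₁.1, (1-lam)*b.2 + lam*a₁.2) with hadef
    have haΩ : a ∈ Ω := by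
      have h := hconv hbΩ ha₁Ω (by linarith : (0:ℝ) ≤ 1 - lam) hlam_pos.le (by ring)
      have he : (1-lam) • b + lam • a₁ = a := by
        rw [hadef]
        ext <;> simp [smul_eq_mul]
      rwa [he] at h
    have ha1 : a.1 = (1-lam)*b.1 + lam*a₁.1 := rfl
    have ha2 : a.2 = (1-lam)*b.2 + lam*a₁.2 := rfl
    clear_value a
    have h3 : ρ ≤ s/2 := min_le_left _ _
    have h4 : ρ ≤ η*s/4 := min_le_right _ _
    clear_value ρ w s₁
    refine ⟨a, haΩ, ?_, ?_⟩
    · have hcoord : σ * ((-S*a.1 + C*a.2) - (-S*ξ.1 + C*ξ.2)) = (1-lam)*w + lam*s₁ := by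
        rw [ha1, ha2, hwdef, hs₁def]; ring
      rw [hcoord, hlam_s₁]
      have h1 : (1-lam)*(-(2*ρ)) ≤ (1-lam)*w :=
        mul_le_mul_of_nonneg_left hwlb (by linarith)
      have h2 : -(2*ρ) ≤ (1-lam)*(-(2*ρ)) := by nlinarith [mul_nonneg hlam_pos.le hρpos.le]
      linarith
    · have hgcomb : C*a.1 + S*a.2 = (1-lam)*(C*b.1 + S*b.2) + lam*(C*a₁.1 + S*a₁.2) := by
        rw [ha1, ha2]; ring
      rw [hgcomb]
      have h1 : (1-lam)*(C*ξ.1 + S*ξ.2 - 2*ρ) ≤ (1-lam)*(C*b.1 + S*b.2) :=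
        mul_le_mul_of_nonneg_left hGlb (by linarith)
      have h2 : lam*(C*ξ.1 + S*ξ.2 - (η/4) * s₁) ≤ lam*(C*a₁.1 + S*a₁.2) :=
        mul_le_mul_of_nonneg_left hga₁ hlam_pos.le
      have h3' : lam * ((η/4) * s₁) = (η/4) * (2*s) := by
        rw [show lam * ((η/4) * s₁) = (η/4) * (lam * s₁) by ring, hlam_s₁]
      have h5 : (1-lam)*(2*ρ) ≤ 2*ρ := by nlinarith [mul_nonneg hlam_pos.le hρpos.le]
      nlinarith [h1, h2, h3', h4, h5, mul_nonneg hlam_pos.le hρpos.le]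

lemma chordCoordBd1 (u v : ℝ × ℝ) (d : ℝ) (h : dist u v ≤ d) : |u.1 - v.1| ≤ d := by
  have h' : dist u.1 v.1 ≤ dist u v := by rw [Prod.dist_eq]; exact le_max_left _ _
  rw [Real.dist_eq] at h'; linarith

lemma chordCoordBd2 (u v : ℝ × ℝ) (d : ℝ) (h : dist u v ≤ d) : |u.2 - v.2| ≤ d := by
  have h' : dist u.2 v.2 ≤ dist u v := by rw [Prod.dist_eq]; exact le_max_right _ _
  rw [Real.dist_eq] at h'; linarith

lemma chordLinBd (C S : ℝ) (hC1 : |C| ≤ 1) (hS1 : |S| ≤ 1) (x1 x2 y1 y2 d : ℝ)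
    (h1 : |x1 - y1| ≤ d) (h2 : |x2 - y2| ≤ d) :
    |(-S*x1 + C*x2) - (-S*y1 + C*y2)| ≤ 2*d := by
  have hd : 0 ≤ d := le_trans (abs_nonneg _) h1
  have e1 : |S * (x1 - y1)| ≤ d := by
    rw [abs_mul]
    calc |S| * |x1 - y1| ≤ 1 * d := mul_le_mul hS1 h1 (abs_nonneg _) zero_le_one
    _ = d := one_mul d
  have e2 : |C * (x2 - y2)| ≤ d := by
    rw [abs_mul]
    calc |C| * |x2 - y2| ≤ 1 * d := mul_le_mul hC1 h2 (abs_nonneg _) zero_le_one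
    _ = d := one_mul d
  have he : (-S*x1 + C*x2) - (-S*y1 + C*y2) = -(S*(x1-y1)) + C*(x2-y2) := by ring
  rw [he]
  refine le_trans (abs_add_le _ _) ?_
  rw [abs_neg]; linarith

lemma chordAbsLe1 (C S : ℝ) (hCS : C^2 + S^2 = 1) : |C| ≤ 1 ∧ |S| ≤ 1 := by
  constructor <;>
  · rw [← Real.sqrt_one, ← Real.sqrt_sq_eq_abs]
    exact Real.sqrt_le_sqrt (by nlinarith [sq_nonneg C, sq_nonneg S])

lemma chordProj (Ω : Set (ℝ × ℝ)) (hconv : Convex ℝ Ω) (z a : ℝ × ℝ) (hz : z ∈ Ω) (ha : a ∈ Ω)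
    (C S cξ ε δ : ℝ) (hε : 0 < ε) (hεδ : ε ≤ δ/2) (hδ : 0 < δ)
    (hgz : C*z.1 + S*z.2 ≤ cξ - δ) (hga1 : cξ - ε ≤ C*a.1 + S*a.2)
    (hga2 : C*a.1 + S*a.2 ≤ cξ) :
    ∃ p ∈ Ω, C*p.1 + S*p.2 = cξ - ε ∧
      |(-S*p.1 + C*p.2) - (-S*a.1 + C*a.2)| ≤
        (2*ε/δ) * |(-S*z.1 + C*z.2) - (-S*a.1 + C*a.2)| := by
  set ga := C*a.1 + S*a.2 with hgadef
  set gz := C*z.1 + S*z.2 with hgzdef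
  have hden : δ/2 ≤ ga - gz := by linarith
  have hdenpos : 0 < ga - gz := by linarith
  set τ := (ga - (cξ - ε))/(ga - gz) with hτdef
  have hτ0 : 0 ≤ τ := div_nonneg (by linarith) hdenpos.le
  have hτ1 : τ ≤ 1 := by
    rw [hτdef, div_le_one hdenpos]; linarith
  have hτle : τ ≤ 2*ε/δ := by
    have h1 : τ ≤ ε/(δ/2) :=
      div_le_div₀ hε.le (by linarith) (by linarith) hden
    have h2 : ε/(δ/2) = 2*ε/δ := by field_simp
    linarith [h2 ▸ h1]
  set p : ℝ × ℝ := ((1-τ)*a.1 + τ*z.1, (1-τ)*a.2 + τ*z.2) with hpdef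
  have hpΩ : p ∈ Ω := by
    have h := hconv ha hz (by linarith : (0:ℝ) ≤ 1 - τ) hτ0 (by ring)
    have he : (1-τ) • a + τ • z = p := by
      rw [hpdef]; ext <;> simp [smul_eq_mul]
    rwa [he] at h
  have hp1 : p.1 = (1-τ)*a.1 + τ*z.1 := rfl
  have hp2 : p.2 = (1-τ)*a.2 + τ*z.2 := rfl
  refine ⟨p, hpΩ, ?_, ?_⟩
  · have he : C*p.1 + S*p.2 = ga - τ*(ga - gz) := by
      rw [hp1, hp2, hgadef, hgzdef]; ring
    rw [he, hτdef, div_mul_cancel₀ _ (ne_of_gt hdenpos)]; ring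
  · have he : (-S*p.1 + C*p.2) - (-S*a.1 + C*a.2) =
        τ * ((-S*z.1 + C*z.2) - (-S*a.1 + C*a.2)) := by
      rw [hp1, hp2]; ring
    rw [he, abs_mul, abs_of_nonneg hτ0]
    exact mul_le_mul_of_nonneg_right hτle (abs_nonneg _)

set_option maxHeartbeats 1000000 in
lemma chordMain (Ω : Set (ℝ × ℝ)) (hconv : Convex ℝ Ω) (hbdd : Bornology.IsBounded Ω)
    (hint : (interior Ω).Nonempty) (C S : ℝ) (hCS : C^2 + S^2 = 1)
    (ξ : ℝ × ℝ) (hreg : IsRegularPoint Ω ξ) (hsup : IsSupportDir Ω ξ (C, S)) :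
    Tendsto (fun ε : ℝ =>
        sSup {r : ℝ | ∃ p ∈ Ω ∩ {q : ℝ × ℝ | C * q.1 + S * q.2 =
                C * ξ.1 + S * ξ.2 - ε},
              ∃ p' ∈ Ω ∩ {q : ℝ × ℝ | C * q.1 + S * q.2 =
                C * ξ.1 + S * ξ.2 - ε},
              r = Real.sqrt ((p.1 - p'.1) ^ 2 + (p.2 - p'.2) ^ 2)} / ε)
      (nhdsWithin 0 (Ioi 0)) atTop := by
  obtain ⟨hC1, hS1⟩ := chordAbsLe1 C S hCS
  obtain ⟨z, hzint⟩ := hint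
  have hzΩ : z ∈ Ω := interior_subset hzint
  obtain ⟨rad, hrad, hball⟩ := Metric.mem_nhds_iff.1 (mem_interior_iff_mem_nhds.1 hzint)
  -- the interior point is strictly below the support line
  have hδpos : 0 < (C*ξ.1 + S*ξ.2) - (C*z.1 + S*z.2) := by
    have hz' : ((z.1 + (rad/2)*C, z.2 + (rad/2)*S) : ℝ × ℝ) ∈ Ω := by
      apply hball
      rw [Metric.mem_ball, Prod.dist_eq, Real.dist_eq, Real.dist_eq]
      have e1 : (z.1 + (rad/2)*C, z.2 + (rad/2)*S).1 - z.1 = (rad/2)*C := by ring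
      have e2 : (z.1 + (rad/2)*C, z.2 + (rad/2)*S).2 - z.2 = (rad/2)*S := by ring
      rw [e1, e2, max_lt_iff, abs_mul, abs_mul,
        abs_of_nonneg (by linarith : (0:ℝ) ≤ rad/2)]
      have b1 : rad/2 * |C| ≤ rad/2 * 1 :=
        mul_le_mul_of_nonneg_left hC1 (by linarith)
      have b2 : rad/2 * |S| ≤ rad/2 * 1 :=
        mul_le_mul_of_nonneg_left hS1 (by linarith)
      constructor <;> linarith
    have h := hsup.2 _ hz'
    have e : C * (z.1 + (rad/2)*C, z.2 + (rad/2)*S).1 +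
        S * (z.1 + (rad/2)*C, z.2 + (rad/2)*S).2
        = C*z.1 + S*z.2 + rad/2 := by
      show C * (z.1 + (rad/2)*C) + S * (z.2 + (rad/2)*S) = _
      linear_combination (rad/2) * hCS
    rw [e] at h
    linarith
  obtain ⟨D, hD⟩ := Metric.isBounded_iff.1 hbdd
  have hD0 : 0 ≤ D := by
    have h := hD hzΩ hzΩ; rw [dist_self] at h; linarith
  have hE : ∀ a ∈ Ω, |(-S*z.1 + C*z.2) - (-S*a.1 + C*a.2)| ≤ 2*D := fun a ha =>
    chordLinBd C S hC1 hS1 z.1 z.2 a.1 a.2 D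
      (chordCoordBd1 z a D (hD hzΩ ha)) (chordCoordBd2 z a D (hD hzΩ ha))
  set cξ := C*ξ.1 + S*ξ.2 with hcξdef
  set δ := cξ - (C*z.1 + S*z.2) with hδdef
  have hgz : C*z.1 + S*z.2 ≤ cξ - δ := by rw [hδdef]; linarith
  have hδ : 0 < δ := hδpos
  clear_value δ
  rw [tendsto_atTop]
  intro M
  set A := |M| + 8*D/δ + 1 with hAdef
  have hA : 0 < A := by rw [hAdef]; positivity
  set η := 2/A with hηdef
  have hη : 0 < η := by rw [hηdef]; positivity
  have hηA : η * A = 2 := by rw [hηdef]; field_simp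
  clear_value A η
  obtain ⟨s₀p, hs₀p, hKp⟩ := chordStepK Ω hconv C S hCS ξ hreg hsup η hη 1 (Or.inl rfl)
  obtain ⟨s₀m, hs₀m, hKm⟩ := chordStepK Ω hconv C S hCS ξ hreg hsup η hη (-1) (Or.inr rfl)
  set s₀ := min s₀p s₀m with hs₀def
  have hs₀ : 0 < s₀ := lt_min hs₀p hs₀m
  have hs₀le1 : s₀ ≤ s₀p := min_le_left _ _
  have hs₀le2 : s₀ ≤ s₀m := min_le_right _ _
  clear_value s₀
  set ε₁ := min (η*s₀) (δ/2) with hε₁def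
  have hε₁ : 0 < ε₁ := lt_min (by positivity) (by linarith)
  have hε₁le1 : ε₁ ≤ η*s₀ := min_le_left _ _
  have hε₁le2 : ε₁ ≤ δ/2 := min_le_right _ _
  clear_value ε₁
  filter_upwards [Ioo_mem_nhdsGT_of_mem (show (0:ℝ) ∈ Ico 0 ε₁ from ⟨le_refl 0, hε₁⟩)]
    with ε hεmem
  obtain ⟨hε, hεlt⟩ := hεmem
  have hεδ : ε ≤ δ/2 := by linarith
  set s := ε/η with hsdef
  have hs : 0 < s := by rw [hsdef]; positivity
  have hηs : η * s = ε := by rw [hsdef]; field_simp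
  have hsle : s ≤ s₀ := by
    rw [hsdef, div_le_iff₀ hη]
    have hcomm : s₀ * η = η * s₀ := mul_comm _ _
    linarith [hεlt, hε₁le1, hcomm]
  clear_value s
  obtain ⟨ap, hapΩ, hapT, hapG⟩ := hKp s hs (le_trans hsle hs₀le1)
  obtain ⟨am, hamΩ, hamT, hamG⟩ := hKm s hs (le_trans hsle hs₀le2)
  rw [one_mul] at hapT
  rw [hηs] at hapG hamG
  have hapG2 : C*ap.1 + S*ap.2 ≤ cξ := hsup.2 ap hapΩ
  have hamG2 : C*am.1 + S*am.2 ≤ cξ := hsup.2 am hamΩ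
  obtain ⟨pp, hppΩ, hppG, hppT⟩ :=
    chordProj Ω hconv z ap hzΩ hapΩ C S cξ ε δ hε hεδ hδ hgz hapG hapG2
  obtain ⟨pm, hpmΩ, hpmG, hpmT⟩ :=
    chordProj Ω hconv z am hzΩ hamΩ C S cξ ε δ hε hεδ hδ hgz hamG hamG2
  have hfacpos : (0:ℝ) ≤ 2*ε/δ := by positivity
  have hppT' : |(-S*pp.1 + C*pp.2) - (-S*ap.1 + C*ap.2)| ≤ (2*ε/δ) * (2*D) :=
    le_trans hppT (mul_le_mul_of_nonneg_left (hE ap hapΩ) hfacpos)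
  have hpmT' : |(-S*pm.1 + C*pm.2) - (-S*am.1 + C*am.2)| ≤ (2*ε/δ) * (2*D) :=
    le_trans hpmT (mul_le_mul_of_nonneg_left (hE am hamΩ) hfacpos)
  have hamT' : -S*am.1 + C*am.2 ≤ (-S*ξ.1 + C*ξ.2) - s := by linarith [hamT]
  have hTpp : (-S*ξ.1 + C*ξ.2) + s - (2*ε/δ)*(2*D) ≤ -S*pp.1 + C*pp.2 := by
    have h := (abs_le.1 hppT').1; linarith
  have hTpm : -S*pm.1 + C*pm.2 ≤ (-S*ξ.1 + C*ξ.2) - s + (2*ε/δ)*(2*D) := by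
    have h := (abs_le.1 hpmT').2; linarith
  have hgap : 2*s - 2*((2*ε/δ)*(2*D)) ≤ (-S*pp.1 + C*pp.2) - (-S*pm.1 + C*pm.2) := by
    linarith
  -- numeric computation: 2*s - 8*D*ε/δ = (|M|+1)*ε
  have hsA : 2*s = A*ε := by
    have h : η * (2*s) = η * (A*ε) := by
      rw [show η*(2*s) = 2*(η*s) by ring, hηs,
        show η*(A*ε) = (η*A)*ε by ring, hηA]
    exact mul_left_cancel₀ (ne_of_gt hη) h
  have hnum : 2*s - 2*((2*ε/δ)*(2*D)) = (|M|+1)*ε := by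
    rw [hsA, hAdef]
    field_simp
    ring
  have hMε : M*ε ≤ 2*s - 2*((2*ε/δ)*(2*D)) := by
    rw [hnum]
    have h := mul_le_mul_of_nonneg_right (le_abs_self M) hε.le
    have h2 : (|M| + 1) * ε = |M| * ε + ε := by ring
    linarith [h, h2]
  set r₀ := Real.sqrt ((pp.1 - pm.1)^2 + (pp.2 - pm.2)^2) with hr₀def
  have hr₀ge : (-S*pp.1 + C*pp.2) - (-S*pm.1 + C*pm.2) ≤ r₀ := by
    have hident : ((-S*pp.1 + C*pp.2) - (-S*pm.1 + C*pm.2))^2 +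
        (C*(pp.1 - pm.1) + S*(pp.2 - pm.2))^2 = (pp.1 - pm.1)^2 + (pp.2 - pm.2)^2 := by
      linear_combination ((pp.1 - pm.1)^2 + (pp.2 - pm.2)^2) * hCS
    have h1 : ((-S*pp.1 + C*pp.2) - (-S*pm.1 + C*pm.2))^2 ≤
        (pp.1 - pm.1)^2 + (pp.2 - pm.2)^2 := by
      have := sq_nonneg (C*(pp.1 - pm.1) + S*(pp.2 - pm.2))
      linarith
    calc (-S*pp.1 + C*pp.2) - (-S*pm.1 + C*pm.2)
        ≤ |(-S*pp.1 + C*pp.2) - (-S*pm.1 + C*pm.2)| := le_abs_self _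
      _ = Real.sqrt (((-S*pp.1 + C*pp.2) - (-S*pm.1 + C*pm.2))^2) :=
          (Real.sqrt_sq_eq_abs _).symm
      _ ≤ r₀ := Real.sqrt_le_sqrt h1
  have hr₀M : M*ε ≤ r₀ := by linarith
  set Λ := {r : ℝ | ∃ p ∈ Ω ∩ {q : ℝ × ℝ | C * q.1 + S * q.2 = cξ - ε},
      ∃ p' ∈ Ω ∩ {q : ℝ × ℝ | C * q.1 + S * q.2 = cξ - ε},
      r = Real.sqrt ((p.1 - p'.1) ^ 2 + (p.2 - p'.2) ^ 2)} with hΛdef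
  have hmem : r₀ ∈ Λ := ⟨pp, ⟨hppΩ, hppG⟩, pm, ⟨hpmΩ, hpmG⟩, rfl⟩
  have hbddΛ : BddAbove Λ := by
    refine ⟨2*D, fun r hr => ?_⟩
    obtain ⟨p, ⟨hpΩ', _⟩, p', ⟨hp'Ω', _⟩, rfl⟩ := hr
    have b1 : |p.1 - p'.1| ≤ D := chordCoordBd1 p p' D (hD hpΩ' hp'Ω')
    have b2 : |p.2 - p'.2| ≤ D := chordCoordBd2 p p' D (hD hpΩ' hp'Ω')
    have h1 : (p.1 - p'.1)^2 + (p.2 - p'.2)^2 ≤ (|p.1 - p'.1| + |p.2 - p'.2|)^2 := by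
      have e1 : |p.1 - p'.1|^2 = (p.1 - p'.1)^2 := sq_abs _
      have e2 : |p.2 - p'.2|^2 = (p.2 - p'.2)^2 := sq_abs _
      have h3 : 0 ≤ |p.1 - p'.1| * |p.2 - p'.2| :=
        mul_nonneg (abs_nonneg _) (abs_nonneg _)
      have e3 : (|p.1 - p'.1| + |p.2 - p'.2|)^2 =
          |p.1 - p'.1|^2 + 2*(|p.1 - p'.1| * |p.2 - p'.2|) + |p.2 - p'.2|^2 := by ring
      rw [e3, e1, e2]
      linarith
    calc Real.sqrt ((p.1 - p'.1)^2 + (p.2 - p'.2)^2)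
        ≤ Real.sqrt ((|p.1 - p'.1| + |p.2 - p'.2|)^2) := Real.sqrt_le_sqrt h1
      _ = |p.1 - p'.1| + |p.2 - p'.2| :=
          Real.sqrt_sq (by positivity)
      _ ≤ 2*D := by linarith
  rw [le_div_iff₀ hε]
  calc M * ε ≤ r₀ := hr₀M
    _ ≤ sSup Λ := le_csSup hbddΛ hmem

/-- If the left vertical support line of `Ω` is not angular and `ξ` is a regular
boundary point with outward unit normal `(cos θ, sin θ)`, `|θ| < φ < π/2`, then the
length `λ(ε)` of the chord of `Ω` cut by the line parallel to the support line at `ξ`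
at distance `ε` inside `Ω` satisfies `λ(ε)/ε → ∞` as `ε → 0⁺`. -/
theorem stmt18 (Ω : Set (ℝ × ℝ)) (hconv : Convex ℝ Ω) (hbdd : Bornology.IsBounded Ω)
    (hint : (interior Ω).Nonempty)
    (hnotang : ¬ AngularSupportAt Ω (leftX Ω))
    (φ θ : ℝ) (hφ : φ ∈ Ioo 0 (π / 2)) (hθ : |θ| < φ)
    (ξ : ℝ × ℝ) (hreg : IsRegularPoint Ω ξ)
    (hsup : IsSupportDir Ω ξ (Real.cos θ, Real.sin θ)) :
    Tendsto (fun ε : ℝ =>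
        sSup {r : ℝ | ∃ p ∈ Ω ∩ {q : ℝ × ℝ | Real.cos θ * q.1 + Real.sin θ * q.2 =
                Real.cos θ * ξ.1 + Real.sin θ * ξ.2 - ε},
              ∃ p' ∈ Ω ∩ {q : ℝ × ℝ | Real.cos θ * q.1 + Real.sin θ * q.2 =
                Real.cos θ * ξ.1 + Real.sin θ * ξ.2 - ε},
              r = Real.sqrt ((p.1 - p'.1) ^ 2 + (p.2 - p'.2) ^ 2)} / ε)
      (nhdsWithin 0 (Ioi 0)) atTop := by
  exact chordMain Ω hconv hbdd hint (Real.cos θ) (Real.sin θ)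
    (by rw [Real.cos_sq_add_sin_sq]) ξ hreg hsup
end
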